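/- arXiv:1709.08696 — 6 statements merged into one kernel-verified Lean document; each statement's English description precedes it below -/
import Mathlib

section
/- If L ⊆ Σ* is an antichain, then its Kleene star L* (the set of all finite concatenations of words of L) is a quasiantichain. -/
open Filter
open scoped ENNReal

/-- The lexicographic partial order on words induced by a strict order `r` on letters:
`ε R w` for all `w`, and `(x :: w) R (y :: w')` iff `r x y`, or `x = y` and `w R w'`. -/
inductive LexR {α : Type*} (r : α → α → Prop) : List α → List α → Prop
  | nil (w : List α) : LexR r [] w
  | head {x y : α} (w w' : List α) (h : r x y) : LexR r (x :: w) (y :: w')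
  | cons (x : α) {w w' : List α} (h : LexR r w w') : LexR r (x :: w) (x :: w')

/-- Two words are comparable (`u ∼ v`) if `u R v` or `v R u`. -/
def LexComp {α : Type*} (r : α → α → Prop) (u v : List α) : Prop :=
  LexR r u v ∨ LexR r v u

/-- A language is an antichain if any two distinct words of it are incomparable. -/
def IsAntichainLang {α : Type*} (r : α → α → Prop) (L : Set (List α)) : Prop :=
  ∀ u ∈ L, ∀ v ∈ L, u ≠ v → ¬ LexComp r u v

/-- A language is a quasiantichain if any two words of it are incomparable or one is a
prefix of the other. -/
def IsQuasiantichainLang {α : Type*} (r : α → α → Prop) (L : Set (List α)) : Prop :=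
  ∀ u ∈ L, ∀ v ∈ L, u <+: v ∨ v <+: u ∨ ¬ LexComp r u v

/-- A language is a chain if any two words of it are comparable. -/
def IsChainLang {α : Type*} (r : α → α → Prop) (L : Set (List α)) : Prop :=
  ∀ u ∈ L, ∀ v ∈ L, LexComp r u v

/-- `|L|_{=n}`: the number of words of length `n` in `L`. -/
noncomputable def countLen {α : Type*} (L : Set (List α)) (n : ℕ) : ℕ :=
  {w ∈ L | w.length = n}.ncard

/-- `L` has exponential growth of order `ε` if `limsup |L|_{=n} / 2^(εn) > 0`. -/
def ExpGrowthOrder {α : Type*} (L : Set (List α)) (ε : ℝ) : Prop :=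
  0 < Filter.limsup (fun n : ℕ => (countLen L n : ℝ≥0∞) / (2 : ℝ≥0∞) ^ (ε * n)) Filter.atTop

/-- `L` has exponential growth if it has exponential growth of some order `ε > 0`. -/
def ExpGrowth {α : Type*} (L : Set (List α)) : Prop :=
  ∃ ε : ℝ, 0 < ε ∧ ExpGrowthOrder L ε

/-- `L` has polynomial growth if `limsup |L|_{=n} / n^k < ∞` for some `k`. -/
def PolyGrowth {α : Type*} (L : Set (List α)) : Prop :=
  ∃ k : ℕ, Filter.limsup (fun n : ℕ => (countLen L n : ℝ≥0∞) / (n : ℝ≥0∞) ^ k) Filter.atTop < ⊤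

/-- `L` is an antichain family if the set of words of length `n` in `L` is an antichain
for every `n`. -/
def AntichainFamily {α : Type*} (r : α → α → Prop) (L : Set (List α)) : Prop :=
  ∀ n : ℕ, IsAntichainLang r {w ∈ L | w.length = n}

/-- `L` has exponential antichain growth if some subset of `L` is an antichain family
with exponential growth. -/
def ExpAntichainGrowth {α : Type*} (r : α → α → Prop) (L : Set (List α)) : Prop :=
  ∃ L' ⊆ L, AntichainFamily r L' ∧ ExpGrowth L'

/-- `L` has polynomial antichain growth if every antichain family contained in `L`
has polynomial growth. -/
def PolyAntichainGrowth {α : Type*} (r : α → α → Prop) (L : Set (List α)) : Prop :=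
  ∀ L' ⊆ L, AntichainFamily r L' → PolyGrowth L'

/-- The Kleene star of a language: all finite concatenations of words of `L`. -/
def KStarLang {α : Type*} (L : Set (List α)) : Set (List α) :=
  {w | ∃ S : List (List α), (∀ u ∈ S, u ∈ L) ∧ w = S.flatten}

/-!
Write two words of `L*` as concatenations `s₁ ⋯ sₘ` and `t₁ ⋯ tₙ` of words of `L` and strip the
longest common run of factors `sᵢ = tᵢ`. If one factorisation runs out, one word is a prefix of the
other. Otherwise the first differing factors are distinct words of the antichain `L`, hence
incomparable, and incomparability of `u` and `v` survives passing to `s ++ u ++ x` and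
`s ++ v ++ y`.
-/

section

variable {α : Type*} {r : α → α → Prop}

theorem LexR.lexComp_of_append_append {u v x y : List α} (h : LexR r (u ++ x) (v ++ y)) :
    LexComp r u v := by
  generalize hux : u ++ x = ux at h
  generalize hvy : v ++ y = vy at h
  induction h generalizing u v with
  | nil =>
    obtain rfl := (List.append_eq_nil_iff.mp hux).1
    exact .inl (.nil v)
  | head w w' hab =>
    match u, v, hux, hvy with
    | [], _, _, _ => exact .inl (.nil _)
    | _ :: _, [], _, _ => exact .inr (.nil _)
    | _ :: u, _ :: v, hux, hvy =>
      obtain ⟨rfl, -⟩ := List.cons_eq_cons.mp hux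
      obtain ⟨rfl, -⟩ := List.cons_eq_cons.mp hvy
      exact .inl (.head u v hab)
  | cons a _ ih =>
    match u, v, hux, hvy with
    | [], _, _, _ => exact .inl (.nil _)
    | _ :: _, [], _, _ => exact .inr (.nil _)
    | _ :: u, _ :: v, hux, hvy =>
      obtain ⟨rfl, hux'⟩ := List.cons_eq_cons.mp hux
      obtain ⟨rfl, hvy'⟩ := List.cons_eq_cons.mp hvy
      exact (ih hux' hvy').imp (.cons _) (.cons _)

theorem LexComp.of_append_append {u v x y : List α} (h : LexComp r (u ++ x) (v ++ y)) :
    LexComp r u v :=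
  h.elim LexR.lexComp_of_append_append fun h => h.lexComp_of_append_append.symm

theorem LexR.of_append_left [Std.Irrefl r] {s u v : List α}
    (h : LexR r (s ++ u) (s ++ v)) : LexR r u v := by
  induction s with
  | nil => exact h
  | cons a s ih =>
    cases h with
    | head _ _ haa => exact absurd haa (Std.Irrefl.irrefl a)
    | cons _ h => exact ih h

theorem LexComp.of_append_left [Std.Irrefl r] {s u v : List α}
    (h : LexComp r (s ++ u) (s ++ v)) : LexComp r u v :=
  h.imp LexR.of_append_left LexR.of_append_left

theorem IsAntichainLang.flatten_prefix_or_not_lexComp [Std.Irrefl r] {L : Set (List α)}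
    (hL : IsAntichainLang r L) {S T : List (List α)} (hS : ∀ s ∈ S, s ∈ L)
    (hT : ∀ t ∈ T, t ∈ L) :
    S.flatten <+: T.flatten ∨ T.flatten <+: S.flatten ∨ ¬ LexComp r S.flatten T.flatten := by
  induction S generalizing T with
  | nil => exact .inl List.nil_prefix
  | cons s S ih =>
    cases T with
    | nil => exact .inr (.inl List.nil_prefix)
    | cons t T =>
      have hs := hS s List.mem_cons_self
      have ht := hT t List.mem_cons_self
      simp only [List.flatten_cons]
      by_cases hst : s = t
      · subst hst
        simp only [List.prefix_append_right_inj]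
        exact (ih (fun u hu => hS u (.tail s hu)) (fun u hu => hT u (.tail s hu))).imp_right
          (Or.imp_right fun hnc hc => hnc hc.of_append_left)
      · exact .inr (.inr fun hc => hL s hs t ht hst hc.of_append_append)

theorem IsAntichainLang.isQuasiantichainLang_kStarLang [Std.Irrefl r]
    {L : Set (List α)} (hL : IsAntichainLang r L) : IsQuasiantichainLang r (KStarLang L) := by
  rintro _ ⟨S, hS, rfl⟩ _ ⟨T, hT, rfl⟩
  exact hL.flatten_prefix_or_not_lexComp hS hT

end

theorem kleene_star_quasiantichain_general {Sigma : Type*} [PartialOrder Sigma]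
    (L : Set (List Sigma)) (hL : IsAntichainLang (· < ·) L) :
    IsQuasiantichainLang (· < ·) (KStarLang L) :=
  hL.isQuasiantichainLang_kStarLang

/-- Kleene star: if `L` is an antichain then `L*` is a quasiantichain. -/
theorem kleene_star_quasiantichain {Sigma : Type*} [Fintype Sigma] [PartialOrder Sigma]
    (L : Set (List Sigma)) (hL : IsAntichainLang (· < ·) L) :
    IsQuasiantichainLang (· < ·) (KStarLang L) :=
  kleene_star_quasiantichain_general L hL
end

section
/- Let Σ = {a, b, 0, 1} be partially ordered so that the only strict relation is a < b (all other pairs of distinct letters are incomparable). Then the language L = ⋃_{n≥1} a^{n−1} b {0,1}^n (where {0,1}^n denotes all words of length n over {0,1}) is context-free, has exponential antichain growth, and every antichain contained in L is finite. -/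
open Filter
open scoped ENNReal

/-- The partial order on the four-letter alphabet `{a, b, 0, 1}` (encoded as
`Fin 4` with `a = 0`, `b = 1`, `0 = 2`, `1 = 3`): the only strict relation is `a < b`. -/
def abRel (x y : Fin 4) : Prop := x = 0 ∧ y = 1

/-- The language `⋃_{n ≥ 1} a^{n-1} b {0,1}^n`. -/
def specialLang : Set (List (Fin 4)) :=
  {w | ∃ n : ℕ, 1 ≤ n ∧ ∃ v : List (Fin 4), v.length = n ∧ (∀ x ∈ v, x = 2 ∨ x = 3) ∧
    w = List.replicate (n - 1) 0 ++ 1 :: v}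

/-!
The grammar `S → a S B | b B`, `B → 0 | 1` generates `L`; that it generates nothing else is
checked rule by rule, reading `S` as `L` and `B` as `{0, 1}`. Two words of `L` of different
lengths are comparable, since the shorter one has its `b` where the longer one still has an `a`;
hence an antichain in `L` has words of one length only and is finite. Within `L_{=2n}`, on the
other hand, all words share the prefix `a^{n-1} b` and `0`, `1` are incomparable, so `L_{=2n}` is
an antichain of `2^n` words.
-/

namespace ContextFreeGrammar

variable {T N : Type*}

def symbolLang (I : N → Language T) : Symbol T N → Language T
  | .terminal t => {[t]}
  | .nonterminal n => I n

def formLang (I : N → Language T) (s : List (Symbol T N)) : Language T :=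
  (s.map (symbolLang I)).prod

variable {I : N → Language T}

@[simp]
lemma formLang_nil : formLang I [] = 1 := rfl

@[simp]
lemma formLang_cons (s : Symbol T N) (u : List (Symbol T N)) :
    formLang I (s :: u) = symbolLang I s * formLang I u := rfl

@[simp]
lemma formLang_append (u v : List (Symbol T N)) :
    formLang I (u ++ v) = formLang I u * formLang I v := by
  simp [formLang]

@[simp]
lemma formLang_singleton (s : Symbol T N) : formLang I [s] = symbolLang I s := by
  simp [formLang]

lemma mem_formLang_map_terminal (w : List T) : w ∈ formLang I (w.map .terminal) := by
  induction w with
  | nil => exact Language.nil_mem_one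
  | cons t w ih =>
    rw [List.map_cons, ← List.singleton_append, formLang_append]
    exact Language.append_mem_mul (a := [t]) (by rw [formLang_singleton]; rfl) ih

lemma _root_.ContextFreeRule.Rewrites.formLang_le {r : ContextFreeRule T N}
    {u v : List (Symbol T N)} (hr : formLang I r.output ≤ I r.input) (h : r.Rewrites u v) :
    formLang I v ≤ formLang I u := by
  obtain ⟨p, q, rfl, rfl⟩ := h.exists_parts
  simp only [formLang_append, formLang_singleton, symbolLang]
  gcongr

variable {g : ContextFreeGrammar T} {I : g.NT → Language T}

lemma Derives.formLang_le (hg : ∀ r ∈ g.rules, formLang I r.output ≤ I r.input)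
    {u v : List (Symbol T g.NT)} (h : g.Derives u v) : formLang I v ≤ formLang I u := by
  induction h with
  | refl => exact le_rfl
  | tail _ hp ih =>
    obtain ⟨r, hr, hrw⟩ := hp
    exact (hrw.formLang_le (hg r hr)).trans ih

theorem language_le_of_forall_rules (hg : ∀ r ∈ g.rules, formLang I r.output ≤ I r.input) :
    g.language ≤ I g.initial := by
  intro w hw
  simpa [symbolLang] using Derives.formLang_le hg hw (mem_formLang_map_terminal w)

end ContextFreeGrammar

namespace LexR

variable {α : Type*} {r : α → α → Prop}

lemma append_left (p : List α) {w w' : List α} (h : LexR r w w') :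
    LexR r (p ++ w) (p ++ w') := by
  induction p with
  | nil => exact h
  | cons a p ih => exact .cons a ih

lemma of_append_left_s4 (hr : ∀ x, ¬ r x x) {p w w' : List α} (h : LexR r (p ++ w) (p ++ w')) :
    LexR r w w' := by
  induction p with
  | nil => exact h
  | cons a p ih =>
    cases h with
    | head _ _ h => exact absurd h (hr a)
    | cons _ h => exact ih h

lemma isPrefix {u v : List α} (h : LexR r u v) (hu : ∀ x ∈ u, ∀ y, ¬ r x y) : u <+: v := by
  induction h with
  | nil w => exact List.nil_prefix
  | head _ _ h => exact absurd h (hu _ List.mem_cons_self _)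
  | cons x _ ih =>
    exact (List.prefix_cons_inj x).2 (ih fun y hy => hu y (List.mem_cons_of_mem x hy))

end LexR

lemma IsAntichainLang.finite {α : Type*} [Finite α] {r : α → α → Prop} {L : Set (List α)}
    (hL : IsAntichainLang r L)
    (hcomp : ∀ u ∈ L, ∀ w ∈ L, u.length ≠ w.length → LexComp r u w) : L.Finite := by
  rcases L.eq_empty_or_nonempty with rfl | ⟨u, hu⟩
  · exact Set.finite_empty
  refine (List.finite_length_eq α u.length).subset fun w hw => ?_
  by_contra hne
  exact hL w hw u hu (by rintro rfl; exact hne rfl) (hcomp w hw u hu hne)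

lemma expGrowthOrder_of_frequently {α : Type*} {L : Set (List α)} {ε : ℝ}
    (h : ∃ᶠ n : ℕ in atTop, (2 : ℝ≥0∞) ^ (ε * n) ≤ countLen L n) : ExpGrowthOrder L ε := by
  refine zero_lt_one.trans_le (le_limsup_of_frequently_le (h.mono fun n hn => ?_))
  rw [ENNReal.le_div_iff_mul_le (.inl (by positivity)) (.inl (by simp)), one_mul]
  exact hn

open ContextFreeGrammar

lemma mem_specialLang_iff {w : List (Fin 4)} :
    w ∈ specialLang ↔ ∃ n v, v.length = n + 1 ∧ (∀ x ∈ v, x = 2 ∨ x = 3) ∧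
      w = List.replicate n 0 ++ 1 :: v := by
  constructor
  · rintro ⟨n, hn, v, hv, hbits, rfl⟩
    exact ⟨n - 1, v, by omega, hbits, rfl⟩
  · rintro ⟨n, v, hv, hbits, rfl⟩
    exact ⟨n + 1, by omega, v, hv, hbits, rfl⟩

lemma length_replicate_append_cons {n : ℕ} {v : List (Fin 4)} (hv : v.length = n + 1) :
    (List.replicate n 0 ++ 1 :: v).length = 2 * (n + 1) := by
  simp only [List.length_append, List.length_replicate, List.length_cons, hv]
  omega

-- `S → a S B | b B` and `B → 0 | 1`, with `S = 0` and `B = 1`.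
def specialRules : Finset (ContextFreeRule (Fin 4) (Fin 2)) :=
  {⟨0, [.terminal 0, .nonterminal 0, .nonterminal 1]⟩, ⟨0, [.terminal 1, .nonterminal 1]⟩,
    ⟨1, [.terminal 2]⟩, ⟨1, [.terminal 3]⟩}

abbrev specialGrammar : ContextFreeGrammar (Fin 4) := ⟨Fin 2, 0, specialRules⟩

def specialGrammarLang : Fin 2 → Language (Fin 4)
  | 0 => specialLang
  | 1 => {[2], [3]}

lemma zero_cons_append_mem_specialLang {u : List (Fin 4)} (hu : u ∈ specialLang) {x : Fin 4}
    (hx : x = 2 ∨ x = 3) : 0 :: (u ++ [x]) ∈ specialLang := by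
  obtain ⟨n, v, hv, hbits, rfl⟩ := mem_specialLang_iff.1 hu
  refine mem_specialLang_iff.2 ⟨n + 1, v ++ [x], by simp [hv], ?_, by simp [List.replicate_succ]⟩
  simpa [or_imp, forall_and] using ⟨hbits, hx⟩

lemma one_pair_mem_specialLang {x : Fin 4} (hx : x = 2 ∨ x = 3) : [1, x] ∈ specialLang :=
  mem_specialLang_iff.2 ⟨0, [x], rfl, by simpa using hx, rfl⟩

lemma formLang_output_le_of_mem_specialRules {r : ContextFreeRule (Fin 4) (Fin 2)}
    (hr : r ∈ specialRules) :
    formLang specialGrammarLang r.output ≤ specialGrammarLang r.input := by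
  fin_cases hr <;>
    simp only [formLang_cons, formLang_nil, symbolLang, specialGrammarLang, mul_one] <;>
    intro w hw
  · obtain ⟨_, rfl, _, ⟨u, hu, _, hx, rfl⟩, rfl⟩ := hw
    rcases hx with rfl | rfl <;> exact zero_cons_append_mem_specialLang hu (by simp)
  · obtain ⟨_, rfl, _, hx, rfl⟩ := hw
    rcases hx with rfl | rfl <;> exact one_pair_mem_specialLang (by simp)
  · exact Or.inl hw
  · exact Or.inr hw

lemma specialGrammar_language_le : specialGrammar.language ≤ specialLang :=
  language_le_of_forall_rules (g := specialGrammar) (I := specialGrammarLang)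
    fun _ => formLang_output_le_of_mem_specialRules

lemma produces_of_mem_specialRules {n : Fin 2} {s : List (Symbol (Fin 4) (Fin 2))}
    (hr : ⟨n, s⟩ ∈ specialRules) : specialGrammar.Produces [.nonterminal n] s :=
  ⟨_, hr, ContextFreeRule.Rewrites.input_output⟩

lemma produces_bit {x : Fin 4} (hx : x = 2 ∨ x = 3) :
    specialGrammar.Produces [.nonterminal 1] [.terminal x] := by
  rcases hx with rfl | rfl <;> exact produces_of_mem_specialRules (by decide)

lemma derives_replicate_append (n : ℕ) {v : List (Fin 4)} (hv : v.length = n + 1)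
    (hbits : ∀ x ∈ v, x = 2 ∨ x = 3) :
    specialGrammar.Derives [.nonterminal 0] ((List.replicate n 0 ++ 1 :: v).map .terminal) := by
  induction n generalizing v with
  | zero =>
    obtain ⟨x, rfl⟩ := List.length_eq_one_iff.1 hv
    have hb : specialGrammar.Produces [.nonterminal 0] [.terminal 1, .nonterminal 1] :=
      produces_of_mem_specialRules (by decide)
    exact hb.trans_derives ((produces_bit (hbits x (by simp))).append_left [.terminal 1]).single
  | succ n ih =>
    obtain ⟨v, x, rfl⟩ := (List.eq_nil_or_concat' v).resolve_left (by rintro rfl; simp at hv)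
    simp only [List.mem_append, List.mem_singleton] at hbits
    have hstep : specialGrammar.Produces [.nonterminal 0]
        ([.terminal 0] ++ [.nonterminal 0] ++ [.nonterminal 1]) :=
      produces_of_mem_specialRules (by decide)
    have hmid := ((ih (by simpa using hv) fun y hy => hbits y (.inl hy)).append_right
      [.nonterminal 1]).append_left [.terminal 0]
    have hlast := (produces_bit (hbits x (.inr rfl))).append_left
      ([.terminal 0] ++ (List.replicate n 0 ++ 1 :: v).map .terminal)
    convert hstep.trans_derives (hmid.trans_produces hlast) using 1
    simp [List.replicate_succ]

lemma specialLang_le_specialGrammar_language : specialLang ≤ specialGrammar.language := by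
  intro w hw
  obtain ⟨n, v, hv, hbits, rfl⟩ := mem_specialLang_iff.1 hw
  exact derives_replicate_append n hv hbits

lemma abRel_irrefl (x : Fin 4) : ¬ abRel x x := by
  rintro ⟨rfl, h⟩
  exact absurd h (by decide)

lemma lexR_of_length_lt {u w : List (Fin 4)} (hu : u ∈ specialLang) (hw : w ∈ specialLang)
    (hlt : u.length < w.length) : LexR abRel w u := by
  obtain ⟨n, v, hv, -, rfl⟩ := mem_specialLang_iff.1 hu
  obtain ⟨m, v', hv', -, rfl⟩ := mem_specialLang_iff.1 hw
  rw [length_replicate_append_cons hv, length_replicate_append_cons hv'] at hlt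
  obtain ⟨k, rfl⟩ := Nat.exists_eq_add_of_lt (show n < m by omega)
  rw [add_assoc, List.replicate_add, List.replicate_succ, List.append_assoc, List.cons_append]
  exact LexR.append_left _ (.head _ _ (show abRel 0 1 from ⟨rfl, rfl⟩))

lemma lexComp_of_length_ne {u w : List (Fin 4)} (hu : u ∈ specialLang) (hw : w ∈ specialLang)
    (hne : u.length ≠ w.length) : LexComp abRel u w := by
  rcases hne.lt_or_gt with hlt | hlt
  · exact .inr (lexR_of_length_lt hu hw hlt)
  · exact .inl (lexR_of_length_lt hw hu hlt)

lemma eq_of_lexR_of_length_eq {u w : List (Fin 4)} (hu : u ∈ specialLang)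
    (hw : w ∈ specialLang) (hlen : u.length = w.length) (h : LexR abRel u w) : u = w := by
  obtain ⟨n, v, hv, hbits, rfl⟩ := mem_specialLang_iff.1 hu
  obtain ⟨m, v', hv', -, rfl⟩ := mem_specialLang_iff.1 hw
  rw [length_replicate_append_cons hv, length_replicate_append_cons hv'] at hlen
  obtain rfl : n = m := by omega
  have hpre : v <+: v' := by
    refine LexR.isPrefix (LexR.of_append_left_s4 abRel_irrefl (p := List.replicate n 0 ++ [1]) ?_)
      fun x hx y hxy => ?_
    · simpa using h
    · rcases hbits x hx with rfl | rfl <;> exact absurd hxy.1 (by decide)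
  rw [hpre.eq_of_length (hv.trans hv'.symm)]

lemma antichainFamily_specialLang : AntichainFamily abRel specialLang := by
  rintro n u ⟨hu, hun⟩ w ⟨hw, hwn⟩ hne (h | h)
  · exact hne (eq_of_lexR_of_length_eq hu hw (hun.trans hwn.symm) h)
  · exact hne (eq_of_lexR_of_length_eq hw hu (hwn.trans hun.symm) h).symm

lemma two_pow_le_countLen_specialLang (n : ℕ) :
    2 ^ (n + 1) ≤ countLen specialLang (2 * (n + 1)) := by
  let word (f : Fin (n + 1) → Bool) : List (Fin 4) :=
    List.replicate n 0 ++ 1 :: List.ofFn fun i => if f i then 3 else 2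
  have hword : Function.Injective word := by
    intro f g h
    have hbit : Function.Injective fun b : Bool => if b then (3 : Fin 4) else 2 := by decide
    exact hbit.comp_left (List.ofFn_injective (List.cons_injective (List.append_cancel_left h)))
  have hsub : Set.range word ⊆ {w ∈ specialLang | w.length = 2 * (n + 1)} := by
    rintro _ ⟨f, rfl⟩
    have hlen : (List.ofFn fun i => if f i then (3 : Fin 4) else 2).length = n + 1 := by simp
    refine ⟨mem_specialLang_iff.2 ⟨n, _, hlen, fun x hx => ?_, rfl⟩,
      length_replicate_append_cons hlen⟩
    obtain ⟨i, rfl⟩ := List.mem_ofFn.1 hx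
    cases f i <;> simp
  calc 2 ^ (n + 1) = (Set.range word).ncard := by
        rw [← Set.image_univ, Set.ncard_image_of_injective _ hword]; simp
    _ ≤ countLen specialLang (2 * (n + 1)) :=
        Set.ncard_le_ncard hsub ((List.finite_length_eq _ _).subset fun _ hw => hw.2)

lemma expGrowth_specialLang : ExpGrowth specialLang := by
  refine ⟨1 / 2, by norm_num, expGrowthOrder_of_frequently (frequently_atTop.2 fun a => ?_)⟩
  refine ⟨2 * (a + 1), by omega, ?_⟩
  have hexp : (1 / 2 : ℝ) * ((2 * (a + 1) : ℕ) : ℝ) = (a + 1 : ℕ) := by push_cast; ring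
  rw [hexp, ENNReal.rpow_natCast]
  exact_mod_cast two_pow_le_countLen_specialLang a

/-- There is a context-free language with exponential antichain growth in which every
antichain is finite. -/
theorem cf_exp_growth_all_antichains_finite :
    Language.IsContextFree (specialLang : Language (Fin 4)) ∧
    ExpAntichainGrowth abRel specialLang ∧
    ∀ L' ⊆ specialLang, IsAntichainLang abRel L' → L'.Finite := by
  refine ⟨⟨specialGrammar, ?_⟩,
    ⟨specialLang, subset_rfl, antichainFamily_specialLang, expGrowth_specialLang⟩, ?_⟩
  · exact specialGrammar_language_le.antisymm specialLang_le_specialGrammar_language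
  · exact fun L' hsub hL' => hL'.finite fun u hu w hw => lexComp_of_length_ne (hsub hu) (hsub hw)
end

section
/- Let L ⊆ Σ* be a quasiantichain with exponential growth. Then there exists an antichain L′ ⊆ L with exponential growth. -/
open Filter
open scoped ENNReal

/-!
Words of a quasiantichain none of which is a prefix of another are pairwise incomparable, so it
suffices to find a prefix-free sublanguage of exponential growth.

Fix an ultrafilter `𝒰` on the levels `n` with `|L|_{=n} ≥ c 2^{εn}` and let `t u` be the
`𝒰`-limit of the proportion of the words of length `n` in `L` that extend `u`; then `∑ t ≤ 1`
over every prefix-free set. Greedily choose, at ever larger levels `n`, about `c 2^{εn/2}` words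
with no previously chosen prefix and with small `t` (by Markov's inequality half of the level
qualifies). Keeping the total `t` of all chosen words below `1/4` makes them block less than a
quarter of every later level, and the words chosen at level `n` cost only `O(2^{-εn/2})` of
this budget.
-/

open Topology Finset

theorem exists_seq_of_forall_exists {σ : Type*} {P : σ → Prop} {R : σ → σ → Prop}
    (h : ∀ x, P x → ∃ y, P y ∧ R x y) {x₀ : σ} (h₀ : P x₀) :
    ∃ g : ℕ → σ, ∀ k, P (g k) ∧ R (g k) (g (k + 1)) := by
  choose! next hnextP hnextR using h
  have hP : ∀ k, P (next^[k] x₀) := fun k => by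
    induction k with
    | zero => exact h₀
    | succ k ih => rw [Function.iterate_succ_apply']; exact hnextP _ ih
  exact ⟨fun k => next^[k] x₀, fun k =>
    ⟨hP k, by simpa only [Function.iterate_succ_apply'] using hnextR _ (hP k)⟩⟩

open scoped Classical in
/-- By Markov's inequality at most `#A / 4` elements of `A` have weight above `4 / #A`. -/
theorem Finset.exists_subset_disjoint_sum_le {ι : Type*} (A B : Finset ι) (f : ι → ℝ)
    (hf : ∀ i ∈ A, 0 ≤ f i) (hfA : ∑ i ∈ A, f i ≤ 1) (hB : 4 * #B ≤ #A) (s : ℕ)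
    (hs : 2 * s ≤ #A) :
    ∃ S ⊆ A, Disjoint S B ∧ #S = s ∧ ∑ i ∈ S, f i ≤ 4 * s / #A := by
  set heavy := {i ∈ A | 4 / #A < f i}
  have hheavy : 4 * #heavy ≤ #A := by
    rcases (#A).eq_zero_or_pos with hA | hA
    · simp [heavy, card_eq_zero.1 hA]
    have hmass : #heavy • (4 / (#A : ℝ)) ≤ 1 :=
      calc #heavy • (4 / (#A : ℝ)) ≤ ∑ i ∈ heavy, f i :=
            card_nsmul_le_sum _ _ _ fun i hi => (mem_filter.1 hi).2.le
        _ ≤ ∑ i ∈ A, f i := sum_le_sum_of_subset_of_nonneg (filter_subset _ _) fun i hi _ => hf i hi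
        _ ≤ 1 := hfA
    rw [nsmul_eq_mul, mul_div_assoc', div_le_one (by positivity)] at hmass
    exact_mod_cast (mul_comm (4 : ℝ) _ ▸ hmass)
  have hgood : s ≤ #(A \ (B ∪ heavy)) := by
    have := le_card_sdiff (B ∪ heavy) A
    have := card_union_le B heavy
    omega
  obtain ⟨S, hSgood, hSs⟩ := exists_subset_card_eq hgood
  refine ⟨S, hSgood.trans sdiff_subset, disjoint_of_subset_right subset_union_left
    (disjoint_of_subset_left hSgood sdiff_disjoint), hSs, ?_⟩
  calc ∑ i ∈ S, f i ≤ #S • (4 / (#A : ℝ)) := sum_le_card_nsmul _ _ _ fun i hi => by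
        have hi' := mem_sdiff.1 (hSgood hi)
        by_contra h
        exact hi'.2 (mem_union_right _ (mem_filter.2 ⟨hi'.1, not_le.1 h⟩))
    _ = 4 * s / #A := by rw [nsmul_eq_mul, hSs, mul_div_assoc', mul_comm]

theorem tendsto_two_rpow_mul_atTop {δ : ℝ} (hδ : 0 < δ) :
    Tendsto (fun n : ℕ => (2 : ℝ) ^ (δ * n)) atTop atTop :=
  (tendsto_rpow_atTop_of_base_gt_one 2 one_lt_two).comp
    (tendsto_natCast_atTop_atTop.const_mul_atTop hδ)

theorem natCast_div_two_rpow_eq_ofReal (k : ℕ) (x : ℝ) :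
    (k : ℝ≥0∞) / 2 ^ x = ENNReal.ofReal (k / 2 ^ x) := by
  rw [ENNReal.ofReal_div_of_pos (by positivity), ENNReal.ofReal_natCast,
    ← ENNReal.ofReal_rpow_of_pos two_pos, ENNReal.ofReal_ofNat]

theorem expGrowthOrder_iff {α : Type*} {L : Set (List α)} {ε : ℝ} :
    ExpGrowthOrder L ε ↔ ∃ c : ℝ, 0 < c ∧ ∃ᶠ n : ℕ in atTop, c * 2 ^ (ε * n) ≤ countLen L n := by
  simp only [ExpGrowthOrder, natCast_div_two_rpow_eq_ofReal]
  constructor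
  · intro h
    obtain ⟨b, hb0, hb⟩ := exists_between h
    have hbtop : b ≠ ⊤ := (hb.trans_le le_top).ne
    refine ⟨b.toReal, ENNReal.toReal_pos hb0.ne' hbtop, ?_⟩
    refine (frequently_lt_of_lt_limsup (by isBoundedDefault) hb).mono fun n hn => ?_
    rw [ENNReal.lt_ofReal_iff_toReal_lt hbtop, lt_div_iff₀ (by positivity)] at hn
    exact hn.le
  · rintro ⟨c, hc, h⟩
    refine (ENNReal.ofReal_pos.2 hc).trans_le (le_limsup_of_frequently_le ?_ (by isBoundedDefault))
    exact h.mono fun n hn => ENNReal.ofReal_le_ofReal ((le_div_iff₀ (by positivity)).2 hn)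

def IsPrefixFree {α : Type*} (A : Set (List α)) : Prop :=
  ∀ u ∈ A, ∀ v ∈ A, u <+: v → u = v

section PrefixFree

variable {α : Type*}

theorem isPrefixFree_of_length_eq {A : Set (List α)} {n : ℕ} (h : ∀ w ∈ A, w.length = n) :
    IsPrefixFree A :=
  fun u hu v hv huv => huv.eq_of_length ((h u hu).trans (h v hv).symm)

theorem isPrefixFree_iUnion {U : ℕ → Set (List α)} (hmono : Monotone U)
    (hU : ∀ k, IsPrefixFree (U k)) : IsPrefixFree (⋃ k, U k) := by
  intro u hu v hv huv
  obtain ⟨i, hi⟩ := Set.mem_iUnion.1 hu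
  obtain ⟨j, hj⟩ := Set.mem_iUnion.1 hv
  exact hU (max i j) u (hmono (le_max_left i j) hi) v (hmono (le_max_right i j) hj) huv

theorem IsQuasiantichainLang.isAntichainLang_of_isPrefixFree {r : α → α → Prop}
    {L A : Set (List α)} (hL : IsQuasiantichainLang r L) (hAL : A ⊆ L) (hA : IsPrefixFree A) :
    IsAntichainLang r A := by
  intro u hu v hv huv
  rcases hL u (hAL hu) v (hAL hv) with h | h | h
  · exact absurd (hA u hu v hv h) huv
  · exact absurd (hA v hv u hu h).symm huv
  · exact h

open scoped Classical in
theorem sum_card_filter_isPrefix_le (A U : Finset (List α)) (hU : IsPrefixFree (U : Set (List α))) :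
    ∑ u ∈ U, #{w ∈ A | u <+: w} ≤ #A := by
  rw [← card_biUnion]
  · exact card_le_card (biUnion_subset.2 fun _ _ => filter_subset _ _)
  · intro u hu v hv huv
    simp only [Function.onFun, disjoint_left, mem_filter]
    rintro w ⟨-, huw⟩ ⟨-, hvw⟩
    rcases List.prefix_or_prefix_of_prefix huw hvw with h | h
    · exact huv (hU u hu v hv h)
    · exact huv (hU v hv u hu h).symm

open scoped Classical in
theorem card_filter_exists_isPrefix_le (A U : Finset (List α)) :
    #{w ∈ A | ∃ u ∈ U, u <+: w} ≤ ∑ u ∈ U, #{w ∈ A | u <+: w} := by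
  refine (card_le_card fun w hw => ?_).trans card_biUnion_le
  obtain ⟨hwA, u, hu, huw⟩ := mem_filter.1 hw
  exact mem_biUnion.2 ⟨u, hu, mem_filter.2 ⟨hwA, huw⟩⟩

end PrefixFree

section Level

variable {α : Type*} [Fintype α]

theorem finite_sep_length_eq (L : Set (List α)) (n : ℕ) : {w ∈ L | w.length = n}.Finite :=
  (List.finite_length_eq α n).subset fun _ hw => hw.2

noncomputable def levelSet (L : Set (List α)) (n : ℕ) : Finset (List α) :=
  (finite_sep_length_eq L n).toFinset

@[simp]
theorem mem_levelSet {L : Set (List α)} {n : ℕ} {w : List α} :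
    w ∈ levelSet L n ↔ w ∈ L ∧ w.length = n := by
  simp [levelSet]

theorem countLen_eq_card_levelSet (L : Set (List α)) (n : ℕ) :
    countLen L n = #(levelSet L n) :=
  Set.ncard_eq_toFinset_card _ _

theorem countLen_mono {L L' : Set (List α)} (h : L ⊆ L') (n : ℕ) :
    countLen L n ≤ countLen L' n := by
  simp only [countLen_eq_card_levelSet]
  exact card_le_card fun w hw => by
    rw [mem_levelSet] at hw ⊢
    exact ⟨h hw.1, hw.2⟩

theorem isPrefixFree_levelSet (L : Set (List α)) (n : ℕ) :
    IsPrefixFree (levelSet L n : Set (List α)) :=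
  isPrefixFree_of_length_eq fun _ hw => (mem_levelSet.1 hw).2

open scoped Classical in
noncomputable def extDensity (L : Set (List α)) (u : List α) (m : ℕ) : ℝ :=
  #{w ∈ levelSet L m | u <+: w} / #(levelSet L m)

theorem extDensity_nonneg (L : Set (List α)) (u : List α) (m : ℕ) : 0 ≤ extDensity L u m := by
  unfold extDensity; positivity

theorem sum_extDensity_le_one (L : Set (List α)) (m : ℕ) (U : Finset (List α))
    (hU : IsPrefixFree (U : Set (List α))) : ∑ u ∈ U, extDensity L u m ≤ 1 := by
  classical
  simp only [extDensity, ← Finset.sum_div]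
  exact div_le_one_of_le₀ (by exact_mod_cast sum_card_filter_isPrefix_le _ U hU) (by positivity)

open scoped Classical in
theorem card_filter_exists_isPrefix_le_mul_sum_extDensity (L : Set (List α)) (m : ℕ)
    (U : Finset (List α)) :
    (#{w ∈ levelSet L m | ∃ u ∈ U, u <+: w} : ℝ) ≤ #(levelSet L m) * ∑ u ∈ U, extDensity L u m := by
  classical
  rcases (#(levelSet L m)).eq_zero_or_pos with h | h
  · simp [card_eq_zero.1 h]
  · have hF : (#(levelSet L m) : ℝ) ≠ 0 := Nat.cast_ne_zero.2 h.ne'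
    simp only [extDensity, ← Finset.sum_div, mul_div_cancel₀ _ hF]
    exact_mod_cast card_filter_exists_isPrefix_le _ U

theorem exists_tendsto_extDensity (L : Set (List α)) (𝒰 : Ultrafilter ℕ) :
    ∃ t : List α → ℝ, ∀ u, Tendsto (extDensity L u) 𝒰 (𝓝 (t u)) := by
  have hbdd : ∀ u m, extDensity L u m ∈ Set.Icc (0 : ℝ) 1 := fun u m =>
    ⟨extDensity_nonneg L u m, by simpa using sum_extDensity_le_one L m {u} (by simp [IsPrefixFree])⟩
  choose t _ ht using fun u => isCompact_Icc.ultrafilter_le_nhds (𝒰.map (extDensity L u))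
    (tendsto_principal.2 (Eventually.of_forall (hbdd u)))
  exact ⟨t, ht⟩

end Level

section Construction

variable {α : Type*} [Fintype α] {L : Set (List α)} {f : Filter ℕ} {t : List α → ℝ} {c ε : ℝ}

theorem sum_le_one_of_tendsto_extDensity [f.NeBot]
    (ht : ∀ u, Tendsto (extDensity L u) f (𝓝 (t u))) (U : Finset (List α))
    (hU : IsPrefixFree (U : Set (List α))) : ∑ u ∈ U, t u ≤ 1 :=
  le_of_tendsto' (tendsto_finsetSum U fun u _ => ht u) fun m => sum_extDensity_le_one L m U hU

theorem nonneg_of_tendsto_extDensity [f.NeBot]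
    (ht : ∀ u, Tendsto (extDensity L u) f (𝓝 (t u))) (u : List α) : 0 ≤ t u :=
  ge_of_tendsto' (ht u) fun m => extDensity_nonneg L u m

/-- The bookkeeping for picking `⌈x⌉₊` words of weight at most `4 / F` in a level of size
`F ≥ x * D`. -/
theorem two_mul_ceil_le_and_div_le {x D F δ : ℝ} (hx : 1 ≤ x) (hδ : 0 < δ) (hD : 8 / δ ≤ D)
    (hD4 : 4 ≤ D) (hF : x * D ≤ F) : 2 * (⌈x⌉₊ : ℝ) ≤ F ∧ 4 * (⌈x⌉₊ : ℝ) / F ≤ δ := by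
  have hs : (⌈x⌉₊ : ℝ) ≤ 2 * x := (Nat.ceil_lt_add_one (by linarith)).le.trans (by linarith)
  have hδD : 8 ≤ δ * D := by rwa [div_le_iff₀ hδ, mul_comm] at hD
  refine ⟨by nlinarith, (div_le_iff₀ (by nlinarith)).2 ?_⟩
  nlinarith

theorem exists_subset_levelSet_extending [f.NeBot] (hf : f ≤ atTop)
    (ht : ∀ u, Tendsto (extDensity L u) f (𝓝 (t u))) (hc : 0 < c) (hε : 0 < ε)
    (hL : ∀ᶠ n : ℕ in f, c * 2 ^ (ε * n) ≤ countLen L n) (U : Finset (List α))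
    (hU : ∑ u ∈ U, t u < 1 / 4) (B : ℕ) :
    ∃ n > B, ∃ S ⊆ levelSet L n, c * 2 ^ (ε / 2 * n) ≤ #S ∧
      (∀ w ∈ S, ∀ u ∈ U, ¬ u <+: w) ∧ ∑ u ∈ U, t u + ∑ w ∈ S, t w < 1 / 4 := by
  classical
  set δ := (1 / 4 - ∑ u ∈ U, t u) / 2 with hδ_def
  have hδ : 0 < δ := by linarith
  have hblock : ∀ᶠ n in f, ∑ u ∈ U, extDensity L u n < 1 / 4 :=
    (tendsto_finsetSum U fun u _ => ht u).eventually_lt_const hU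
  have hlarge : ∀ᶠ n : ℕ in f, 1 / c + 8 / δ + 4 ≤ (2 : ℝ) ^ (ε / 2 * n) :=
    ((tendsto_two_rpow_mul_atTop (half_pos hε)).eventually_ge_atTop _).filter_mono hf
  obtain ⟨n, hnB, hnL, hnU, hnD⟩ :=
    (((eventually_gt_atTop B).filter_mono hf).and (hL.and (hblock.and hlarge))).exists
  set D := (2 : ℝ) ^ (ε / 2 * n)
  set F := #(levelSet L n)
  have hcD : 1 ≤ c * D := by
    rw [← div_le_iff₀' hc]; linarith [div_nonneg (by norm_num : (0 : ℝ) ≤ 8) hδ.le]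
  have hF : c * D * D ≤ F := by
    rw [mul_assoc, ← Real.rpow_add two_pos, ← add_mul, add_halves]
    rwa [countLen_eq_card_levelSet] at hnL
  obtain ⟨h2s, hsδ⟩ := two_mul_ceil_le_and_div_le hcD hδ (by linarith [one_div_pos.2 hc])
    (by linarith [one_div_pos.2 hc, div_pos (by norm_num : (0 : ℝ) < 8) hδ]) hF
  set blocked := {w ∈ levelSet L n | ∃ u ∈ U, u <+: w}
  have hblocked : 4 * #blocked ≤ F := by
    have := card_filter_exists_isPrefix_le_mul_sum_extDensity L n U
    have : (4 * #blocked : ℝ) ≤ F := by nlinarith [(Nat.cast_nonneg F : (0 : ℝ) ≤ F)]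
    exact_mod_cast this
  obtain ⟨S, hSL, hSB, hSs, hSt⟩ := (levelSet L n).exists_subset_disjoint_sum_le blocked t
    (fun u _ => nonneg_of_tendsto_extDensity ht u)
    (sum_le_one_of_tendsto_extDensity ht _ (isPrefixFree_levelSet L n)) hblocked ⌈c * D⌉₊
    (by exact_mod_cast h2s)
  have hSδ : ∑ w ∈ S, t w ≤ δ := hSt.trans hsδ
  refine ⟨n, hnB, S, hSL, hSs ▸ Nat.le_ceil _, fun w hw u hu huw => ?_, by linarith⟩
  exact disjoint_left.1 hSB hw (mem_filter.2 ⟨hSL hw, u, hu, huw⟩)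

/-- A state `(level, chosen words)` of the greedy construction. -/
def IsAdmissible (L : Set (List α)) (t : List α → ℝ) (p : ℕ × Finset (List α)) : Prop :=
  (p.2 : Set (List α)) ⊆ L ∧ IsPrefixFree (p.2 : Set (List α)) ∧ (∀ w ∈ p.2, w.length ≤ p.1) ∧
    ∑ u ∈ p.2, t u < 1 / 4

theorem IsAdmissible.exists_step [f.NeBot] (hf : f ≤ atTop)
    (ht : ∀ u, Tendsto (extDensity L u) f (𝓝 (t u))) (hc : 0 < c) (hε : 0 < ε)
    (hL : ∀ᶠ n : ℕ in f, c * 2 ^ (ε * n) ≤ countLen L n) {p : ℕ × Finset (List α)}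
    (hp : IsAdmissible L t p) :
    ∃ q, IsAdmissible L t q ∧ p.1 < q.1 ∧ p.2 ⊆ q.2 ∧
      c * 2 ^ (ε / 2 * q.1) ≤ countLen (q.2 : Set (List α)) q.1 := by
  classical
  obtain ⟨hpL, hpU, hplen, hpt⟩ := hp
  obtain ⟨n, hn, S, hSL, hScard, hSU, hSt⟩ :=
    exists_subset_levelSet_extending hf ht hc hε hL p.2 hpt p.1
  have hSlen : ∀ w ∈ S, w.length = n := fun w hw => (mem_levelSet.1 (hSL hw)).2
  have hdisj : Disjoint p.2 S := disjoint_left.2 fun w hwp hwS => by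
    have := hplen w hwp; have := hSlen w hwS; omega
  refine ⟨(n, p.2 ∪ S), ⟨?_, ?_, ?_, by rwa [sum_union hdisj]⟩, hn, subset_union_left, ?_⟩
  · rw [coe_union]
    exact Set.union_subset hpL fun w hw => (mem_levelSet.1 (hSL hw)).1
  · intro u hu v hv huv
    rcases mem_union.1 hu with hu | hu <;> rcases mem_union.1 hv with hv | hv
    · exact hpU u hu v hv huv
    · exact absurd huv (hSU v hv u hu)
    · have := huv.length_le; have := hplen v hv; have := hSlen u hu; omega
    · exact huv.eq_of_length ((hSlen u hu).trans (hSlen v hv).symm)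
  · intro w hw
    rcases mem_union.1 hw with hw | hw
    · exact (hplen w hw).trans hn.le
    · exact (hSlen w hw).le
  · refine hScard.trans (Nat.cast_le.2 ?_)
    rw [countLen_eq_card_levelSet]
    exact card_le_card fun w hw => mem_levelSet.2 ⟨mem_union_right _ hw, hSlen w hw⟩

end Construction

theorem exists_isPrefixFree_subset_frequently_le {α : Type*} [Fintype α] {L : Set (List α)}
    {c ε : ℝ} (hc : 0 < c) (hε : 0 < ε)
    (hL : ∃ᶠ n : ℕ in atTop, c * 2 ^ (ε * n) ≤ countLen L n) :
    ∃ L' ⊆ L, IsPrefixFree L' ∧ ∃ᶠ n : ℕ in atTop, c * 2 ^ (ε / 2 * n) ≤ countLen L' n := by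
  have := frequently_iff_neBot.1 hL
  set 𝒰 := Ultrafilter.of (atTop ⊓ 𝓟 {n : ℕ | c * 2 ^ (ε * n) ≤ countLen L n})
  have h𝒰 : (𝒰 : Filter ℕ) ≤ _ := Ultrafilter.of_le _
  obtain ⟨t, ht⟩ := exists_tendsto_extDensity L 𝒰
  obtain ⟨g, hg⟩ := exists_seq_of_forall_exists
    (P := IsAdmissible L t) (fun _ hp => hp.exists_step (h𝒰.trans inf_le_left) ht hc hε
      (h𝒰.trans inf_le_right (mem_principal_self _)))
    (x₀ := (0, ∅)) ⟨by simp, by simp [IsPrefixFree], by simp, by simp⟩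
  have hmono : Monotone fun k => ((g k).2 : Set (List α)) :=
    monotone_nat_of_le_succ fun k => coe_subset.2 (hg k).2.2.1
  have hlevel : StrictMono fun k => (g k).1 := strictMono_nat_of_lt_succ fun k => (hg k).2.1
  refine ⟨⋃ k, ((g k).2 : Set (List α)), Set.iUnion_subset fun k => (hg k).1.1,
    isPrefixFree_iUnion hmono fun k => (hg k).1.2.1, frequently_atTop.2 fun K => ?_⟩
  refine ⟨(g (K + 1)).1, (Nat.le_succ K).trans (hlevel.id_le _), ?_⟩
  exact (hg K).2.2.2.trans (Nat.cast_le.2 (countLen_mono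
    (Set.subset_iUnion (fun k => ((g k).2 : Set (List α))) (K + 1)) _))

theorem ExpGrowth.exists_isPrefixFree_subset {α : Type*} [Fintype α] {L : Set (List α)}
    (h : ExpGrowth L) : ∃ L' ⊆ L, IsPrefixFree L' ∧ ExpGrowth L' := by
  obtain ⟨ε, hε, hL⟩ := h
  obtain ⟨c, hc, hfreq⟩ := expGrowthOrder_iff.1 hL
  obtain ⟨L', hL'L, hL', hfreq'⟩ := exists_isPrefixFree_subset_frequently_le hc hε hfreq
  exact ⟨L', hL'L, hL', ε / 2, half_pos hε, expGrowthOrder_iff.2 ⟨c, hc, hfreq'⟩⟩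

/-- An exponential quasiantichain contains an exponential antichain. -/
theorem exp_quasiantichain_contains_exp_antichain {Sigma : Type*} [Fintype Sigma]
    [PartialOrder Sigma] (L : Set (List Sigma))
    (hq : IsQuasiantichainLang (· < ·) L) (hexp : ExpGrowth L) :
    ∃ L' ⊆ L, IsAntichainLang (· < ·) L' ∧ ExpGrowth L' := by
  obtain ⟨L', hL'L, hL', hgrowth⟩ := hexp.exists_isPrefixFree_subset
  exact ⟨L', hL'L, hq.isAntichainLang_of_isPrefixFree hL'L hL', hgrowth⟩
end

section
/- Let L1, L2 ⊆ Σ* be languages with polynomial antichain growth. Then the concatenation L1·L2 = {l1·l2 | l1 ∈ L1, l2 ∈ L2} has polynomial antichain growth. -/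
/-!
Write each length-`n` word of an antichain family inside `L1 · L2` as `u ++ v` with `|u| = i`.
Two such words with distinct prefixes of equal length compare as their prefixes do, and two
with the same prefix compare as their suffixes do; so the prefixes of length `i` form an
antichain of `L1`, and for each prefix the suffixes form an antichain of `L2`. Choosing a largest
length-`m` antichain of `L` for every `m` yields an antichain family, so polynomial antichain
growth bounds every length-`m` antichain of `L` by `C (m + 1) ^ k`. Summing over the split
point, the family has at most `∑ i ≤ n, C1 (i + 1) ^ k1 * C2 (n - i + 1) ^ k2` words of length
`n`, a polynomial in `n`.
-/

open Filter
open scoped ENNReal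

section

variable {α : Type*} {r : α → α → Prop}

theorem LexR.append_left_s8 (u : List α) {v v' : List α} (h : LexR r v v') :
    LexR r (u ++ v) (u ++ v') := by
  induction u with
  | nil => exact h
  | cons x t ih => exact LexR.cons x ih

theorem LexR.append_of_length_eq_of_ne {u u' : List α} (h : LexR r u u')
    (hlen : u.length = u'.length) (hne : u ≠ u') (v v' : List α) :
    LexR r (u ++ v) (u' ++ v') := by
  induction h with
  | nil w =>
    cases w with
    | nil => exact absurd rfl hne
    | cons _ _ => simp at hlen
  | head _ _ h => exact LexR.head _ _ h
  | cons x _ ih =>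
    exact LexR.cons x (ih (by simpa using hlen) fun e => hne (by rw [e]))

theorem LexComp.append_left_s8 (u : List α) {v v' : List α} (h : LexComp r v v') :
    LexComp r (u ++ v) (u ++ v') :=
  h.imp (LexR.append_left_s8 u) (LexR.append_left_s8 u)

theorem LexComp.append_of_length_eq_of_ne {u u' : List α} (h : LexComp r u u')
    (hlen : u.length = u'.length) (hne : u ≠ u') (v v' : List α) :
    LexComp r (u ++ v) (u' ++ v') :=
  h.imp (fun h => h.append_of_length_eq_of_ne hlen hne v v')
    (fun h => h.append_of_length_eq_of_ne hlen.symm hne.symm v' v)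

theorem IsAntichainLang.mono {S T : Set (List α)} (hT : IsAntichainLang r T) (hST : S ⊆ T) :
    IsAntichainLang r S :=
  fun u hu v hv => hT u (hST hu) v (hST hv)

theorem IsAntichainLang.prefixes_of_length {S : Set (List α)} (hS : IsAntichainLang r S)
    (i : ℕ) : IsAntichainLang r {u | u.length = i ∧ ∃ v, u ++ v ∈ S} := by
  rintro u ⟨hu, v, huv⟩ u' ⟨hu', v', huv'⟩ hne hcomp
  have hlen : u.length = u'.length := hu.trans hu'.symm
  refine hS _ huv _ huv' (fun e => hne (List.append_inj e hlen).1) ?_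
  exact hcomp.append_of_length_eq_of_ne hlen hne v v'

theorem IsAntichainLang.leftQuotient {S : Set (List α)} (hS : IsAntichainLang r S)
    (u : List α) : IsAntichainLang r {v | u ++ v ∈ S} :=
  fun _ hv _ hv' hne hcomp =>
    hS _ hv _ hv' (fun e => hne (List.append_cancel_left e)) (hcomp.append_left_s8 u)

def lengthAntichains (r : α → α → Prop) (L : Set (List α)) (n : ℕ) : Set (Set (List α)) :=
  {A | A ⊆ L ∧ (∀ w ∈ A, w.length = n) ∧ IsAntichainLang r A}

theorem finite_lengthAntichains [Finite α] (r : α → α → Prop) (L : Set (List α)) (n : ℕ) :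
    (lengthAntichains r L n).Finite :=
  (List.finite_length_eq α n).finite_subsets.subset fun _ hA => hA.2.1

theorem polyGrowth_iff_exists_le (L : Set (List α)) :
    PolyGrowth L ↔ ∃ k C : ℕ, ∀ n, countLen L n ≤ C * (n + 1) ^ k := by
  constructor
  · rintro ⟨k, hk⟩
    obtain ⟨M, hM⟩ := ENNReal.exists_nat_gt hk.ne
    obtain ⟨N, hN⟩ := eventually_atTop.1 (eventually_lt_of_limsup_lt hM)
    refine ⟨k, M + ∑ n ∈ Finset.range (N + 1), countLen L n, fun n => ?_⟩
    rcases le_or_gt n N with hn | hn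
    · calc countLen L n ≤ ∑ n ∈ Finset.range (N + 1), countLen L n :=
            Finset.single_le_sum (fun _ _ => Nat.zero_le _) (Finset.mem_range_succ_iff.2 hn)
        _ ≤ M + ∑ n ∈ Finset.range (N + 1), countLen L n := Nat.le_add_left _ _
        _ ≤ _ := Nat.le_mul_of_pos_right _ (by positivity)
    · have hlt : (countLen L n : ℝ≥0∞) < M * (n : ℝ≥0∞) ^ k := by
        rw [← ENNReal.div_lt_iff (by simp; omega) (by simp)]
        exact hN n hn.le
      have hlt' : countLen L n < M * n ^ k := by exact_mod_cast hlt
      calc countLen L n ≤ M * n ^ k := hlt'.le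
        _ ≤ _ := by gcongr <;> omega
  · rintro ⟨k, C, hC⟩
    refine ⟨k, lt_of_le_of_lt (b := ((C * 2 ^ k : ℕ) : ℝ≥0∞)) ?_ (ENNReal.natCast_lt_top _)⟩
    refine limsup_le_of_le (by isBoundedDefault) (eventually_atTop.2 ⟨1, fun n hn => ?_⟩)
    refine ENNReal.div_le_of_le_mul ?_
    have : countLen L n ≤ C * 2 ^ k * n ^ k :=
      calc countLen L n ≤ C * (n + 1) ^ k := hC n
        _ ≤ C * (2 * n) ^ k := by gcongr; omega
        _ = C * 2 ^ k * n ^ k := by ring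
    exact_mod_cast this

theorem PolyAntichainGrowth.exists_ncard_le [Finite α] {L : Set (List α)}
    (h : PolyAntichainGrowth r L) :
    ∃ k C : ℕ, ∀ n, ∀ A ∈ lengthAntichains r L n, A.ncard ≤ C * (n + 1) ^ k := by
  have hmax n := Set.exists_max_image _ Set.ncard (finite_lengthAntichains r L n)
    ⟨∅, Set.empty_subset _, by simp, by simp [IsAntichainLang]⟩
  choose A hA hAmax using hmax
  have hslice n : {w ∈ ⋃ m, A m | w.length = n} = A n := by
    ext w
    simp only [Set.mem_ofPred_eq, Set.mem_iUnion]
    constructor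
    · rintro ⟨⟨m, hw⟩, rfl⟩
      rwa [(hA m).2.1 w hw]
    · exact fun hw => ⟨⟨n, hw⟩, (hA n).2.1 w hw⟩
  obtain ⟨k, C, hC⟩ := (polyGrowth_iff_exists_le _).1 <|
    h _ (Set.iUnion_subset fun m => (hA m).1) fun n => (hslice n).symm ▸ (hA n).2.2
  refine ⟨k, C, fun n B hB => (hAmax n B hB).trans ?_⟩
  simpa only [countLen, hslice] using hC n

theorem ncard_biUnion_le_ncard_mul {ι : Type*} {t : Set ι} (ht : t.Finite) (s : ι → Set α)
    {c : ℕ} (hs : ∀ i ∈ t, (s i).ncard ≤ c) : (⋃ i ∈ t, s i).ncard ≤ t.ncard * c := by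
  rw [← ht.coe_toFinset, Set.ncard_coe_finset, ← smul_eq_mul, ← Finset.sum_const]
  refine (ht.toFinset.set_ncard_biUnion_le s).trans (Finset.sum_le_sum fun i hi => ?_)
  exact hs i (ht.mem_toFinset.1 hi)

theorem IsAntichainLang.ncard_le_sum_of_subset_append [Finite α] {L1 L2 S : Set (List α)}
    {n : ℕ} {b1 b2 : ℕ → ℕ} (hS : IsAntichainLang r S) (hlen : ∀ w ∈ S, w.length = n)
    (hsub : S ⊆ {w | ∃ l1 ∈ L1, ∃ l2 ∈ L2, w = l1 ++ l2})
    (hb1 : ∀ i, ∀ A ∈ lengthAntichains r L1 i, A.ncard ≤ b1 i)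
    (hb2 : ∀ i, ∀ A ∈ lengthAntichains r L2 i, A.ncard ≤ b2 i) :
    S.ncard ≤ ∑ i ∈ Finset.range (n + 1), b1 i * b2 (n - i) := by
  set P : ℕ → Set (List α) := fun i => {u ∈ L1 | u.length = i ∧ ∃ v, u ++ v ∈ S}
  set Q : List α → Set (List α) := fun u => {v ∈ L2 | u ++ v ∈ S}
  have hP i : P i ∈ lengthAntichains r L1 i :=
    ⟨fun _ hu => hu.1, fun _ hu => hu.2.1, (hS.prefixes_of_length i).mono fun _ hu => hu.2⟩
  have hQ u : Q u ∈ lengthAntichains r L2 (n - u.length) := by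
    refine ⟨fun _ hv => hv.1, fun v hv => ?_, (hS.leftQuotient u).mono fun _ hv => hv.2⟩
    have := hlen _ hv.2
    simp only [List.length_append] at this
    omega
  have hcover : S ⊆ ⋃ i ∈ Finset.range (n + 1), ⋃ u ∈ P i, (u ++ ·) '' Q u := by
    intro w hw
    obtain ⟨u, hu, v, hv, rfl⟩ := hsub hw
    have : u.length < n + 1 := by have := hlen _ hw; simp only [List.length_append] at this; omega
    simp only [Set.mem_iUnion, Set.mem_image]
    exact ⟨u.length, Finset.mem_range.2 this, u, ⟨hu, rfl, v, hw⟩, v, ⟨hv, hw⟩, rfl⟩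
  have hSfin : S.Finite := (List.finite_length_eq α n).subset hlen
  calc S.ncard ≤ (⋃ i ∈ Finset.range (n + 1), ⋃ u ∈ P i, (u ++ ·) '' Q u).ncard := by
        refine Set.ncard_le_ncard hcover (hSfin.subset ?_)
        simp only [Set.iUnion_subset_iff, Set.image_subset_iff]
        exact fun _ _ _ _ _ hv => hv.2
    _ ≤ ∑ i ∈ Finset.range (n + 1), (⋃ u ∈ P i, (u ++ ·) '' Q u).ncard :=
        Finset.set_ncard_biUnion_le _ _
    _ ≤ ∑ i ∈ Finset.range (n + 1), b1 i * b2 (n - i) := by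
        refine Finset.sum_le_sum fun i _ => ?_
        have hPfin : (P i).Finite := (List.finite_length_eq α i).subset fun _ hu => hu.2.1
        refine (ncard_biUnion_le_ncard_mul hPfin _ fun u hu => ?_).trans
          (Nat.mul_le_mul_right _ (hb1 i _ (hP i)))
        rw [Set.ncard_image_of_injective _ (List.append_right_injective u), ← hu.2.1]
        exact hb2 _ _ (hQ u)

end

/-- The concatenation of two languages with polynomial antichain growth has
polynomial antichain growth. -/
theorem concat_poly_antichain_growth {Sigma : Type*} [Fintype Sigma] [PartialOrder Sigma]
    (L1 L2 : Set (List Sigma))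
    (h1 : PolyAntichainGrowth (· < ·) L1) (h2 : PolyAntichainGrowth (· < ·) L2) :
    PolyAntichainGrowth (· < ·) {w | ∃ l1 ∈ L1, ∃ l2 ∈ L2, w = l1 ++ l2} := by
  intro L' hsub hfam
  obtain ⟨k1, C1, hb1⟩ := h1.exists_ncard_le
  obtain ⟨k2, C2, hb2⟩ := h2.exists_ncard_le
  refine (polyGrowth_iff_exists_le L').2 ⟨k1 + k2 + 1, C1 * C2, fun n => ?_⟩
  calc countLen L' n
      ≤ ∑ i ∈ Finset.range (n + 1), C1 * (i + 1) ^ k1 * (C2 * (n - i + 1) ^ k2) :=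
        (hfam n).ncard_le_sum_of_subset_append (fun _ hw => hw.2)
          (fun _ hw => hsub hw.1) hb1 hb2
    _ ≤ ∑ _i ∈ Finset.range (n + 1), C1 * (n + 1) ^ k1 * (C2 * (n + 1) ^ k2) := by
        refine Finset.sum_le_sum fun i hi => ?_
        have := Finset.mem_range_succ_iff.1 hi
        gcongr; omega
    _ = C1 * C2 * (n + 1) ^ (k1 + k2 + 1) := by
        rw [Finset.sum_const, Finset.card_range, smul_eq_mul]; ring
end

section
/- Let A = (Q, Σ, Δ, q0, F) be an NFA over a partially ordered alphabet Σ. Then 𝓛(A) has polynomial antichain growth if and only if 𝓛(A_{q,q}) is a chain for every bireachable state q of A. -/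
open Filter
open scoped ENNReal

/-- A state `q` is bireachable if `q` is reachable from the initial state `q0` and some
accepting state is reachable from `q`. -/
def Bireachable {Sigma Q : Type*} (step : Q → Sigma → Set Q) (q0 : Q) (F : Set Q)
    (q : Q) : Prop :=
  (∃ w : List Sigma, q ∈ (NFA.mk step {q0} F).evalFrom {q0} w) ∧
  (∃ w : List Sigma, ∃ q' ∈ F, q' ∈ (NFA.mk step {q0} F).evalFrom {q} w)

/-!
If a bireachable state `q` has incomparable loops `u` and `v`, then `uv` and `vu` are incomparable
loops of the same length, so the words `w₀ x₁ ⋯ xⱼ w₁` with every `xᵢ ∈ {uv, vu}` (where `w₀` leads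
from `q0` to `q` and `w₁` from `q` to `F`) form an antichain family with `2 ^ j` words of
length `|w₀ w₁| + j |uv|`.

Conversely, record for an accepting run on a word of length `n` and each state its first and last
visit and the letter read at the last visit. There are polynomially many such signatures in `n`,
and two words of the same length whose runs have the same signature are comparable, so each
antichain of words of length `n` is polynomially small.
-/

section Lex

variable {α β : Type*} {r : α → α → Prop}

theorem lexR_of_isPrefix {u v : List α} (h : u <+: v) : LexR r u v := by
  obtain ⟨t, rfl⟩ := h
  induction u with
  | nil => exact .nil t
  | cons x u ih => exact .cons x ih

theorem lexComp_refl (u : List α) : LexComp r u u :=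
  .inl (lexR_of_isPrefix (List.prefix_refl u))

theorem lexComp_comm {u v : List α} : LexComp r u v ↔ LexComp r v u := Or.comm

theorem exists_append_cons_of_not_isPrefix {u v : List α} (hu : ¬ u <+: v) (hv : ¬ v <+: u) :
    ∃ p a s b t, u = p ++ a :: s ∧ v = p ++ b :: t ∧ a ≠ b := by
  induction u generalizing v with
  | nil => exact absurd (List.nil_prefix) hu
  | cons x u ih =>
    cases v with
    | nil => exact absurd (List.nil_prefix) hv
    | cons y v =>
      by_cases hxy : x = y
      · subst hxy
        obtain ⟨p, a, s, b, t, rfl, rfl, hab⟩ :=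
          ih (by simpa using hu) (by simpa using hv)
        exact ⟨x :: p, a, s, b, t, rfl, rfl, hab⟩
      · exact ⟨[], x, u, y, v, rfl, rfl, hxy⟩

theorem exists_append_cons_of_length_eq {u v : List α} (hlen : u.length = v.length)
    (hne : u ≠ v) : ∃ p a s b t, u = p ++ a :: s ∧ v = p ++ b :: t ∧ a ≠ b :=
  exists_append_cons_of_not_isPrefix (fun h => hne (h.eq_of_length hlen))
    (fun h => hne (h.eq_of_length hlen.symm).symm)

variable [Std.Irrefl r]

theorem lexR_append_cons_iff {p s t : List α} {a b : α} (hab : a ≠ b) :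
    LexR r (p ++ a :: s) (p ++ b :: t) ↔ r a b := by
  refine ⟨fun h => ?_, fun h => ?_⟩
  · induction p with
    | nil =>
      cases h with
      | head _ _ h => exact h
      | cons _ _ => exact absurd rfl hab
    | cons x p ih =>
      cases h with
      | head _ _ h => exact absurd h (Std.Irrefl.irrefl x)
      | cons _ h => exact ih h
  · induction p with
    | nil => exact .head s t h
    | cons x p ih => exact .cons x ih

theorem lexComp_append_cons_iff {p s t : List α} {a b : α} (hab : a ≠ b) :
    LexComp r (p ++ a :: s) (p ++ b :: t) ↔ r a b ∨ r b a := by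
  rw [LexComp, lexR_append_cons_iff hab, lexR_append_cons_iff hab.symm]

theorem not_lexComp_append_append {u v : List α} (h : ¬ LexComp r u v) (z x y : List α) :
    ¬ LexComp r (z ++ u ++ x) (z ++ v ++ y) := by
  obtain ⟨p, a, s, b, t, rfl, rfl, hab⟩ := exists_append_cons_of_not_isPrefix
    (fun h' => h (.inl (lexR_of_isPrefix h'))) (fun h' => h (.inr (lexR_of_isPrefix h')))
  rw [lexComp_append_cons_iff hab] at h
  have reassoc (c : α) (w w' : List α) : z ++ (p ++ c :: w) ++ w' = z ++ p ++ c :: (w ++ w') := by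
    simp
  rwa [reassoc, reassoc, lexComp_append_cons_iff hab]

theorem not_lexComp_flatten_map {g : β → List α} (hg : ∀ x y, x ≠ y → ¬ LexComp r (g x) (g y))
    {bs bs' : List β} (hlen : bs.length = bs'.length) (hne : bs ≠ bs') (z x y : List α) :
    ¬ LexComp r (z ++ (bs.map g).flatten ++ x) (z ++ (bs'.map g).flatten ++ y) := by
  induction bs generalizing bs' z with
  | nil => cases bs' with
    | nil => exact absurd rfl hne
    | cons => simp at hlen
  | cons c bs ih =>
    cases bs' with
    | nil => simp at hlen
    | cons c' bs' =>
      simp only [List.map_cons, List.flatten_cons, List.append_assoc]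
      by_cases hc : c = c'
      · subst hc
        simpa only [List.append_assoc] using
          ih (by simpa using hlen) (by simpa using hne) (z ++ g c)
      · simpa only [List.append_assoc] using not_lexComp_append_append (hg c c' hc) z _ _

end Lex

namespace NFA

variable {α σ : Type*} (M : NFA α σ)

def IsRun (w : List α) (ρ : ℕ → σ) : Prop :=
  ∀ i (h : i < w.length), ρ (i + 1) ∈ M.step (ρ i) w[i]

variable {M}

theorem mem_evalFrom_singleton_iff_exists_isRun {s t : σ} {w : List α} :
    t ∈ M.evalFrom {s} w ↔ ∃ ρ, M.IsRun w ρ ∧ ρ 0 = s ∧ ρ w.length = t := by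
  induction w generalizing s with
  | nil => exact ⟨fun h => ⟨fun _ => t, nofun, h, rfl⟩, fun ⟨ρ, _, h0, h1⟩ => h0 ▸ h1 ▸ rfl⟩
  | cons a w ih =>
    rw [evalFrom_cons, stepSet_singleton, mem_evalFrom_iff_exists]
    constructor
    · rintro ⟨s', hs', ht⟩
      obtain ⟨ρ, hρ, h0, h1⟩ := ih.1 ht
      refine ⟨fun | 0 => s | i + 1 => ρ i, fun i hi => ?_, rfl, h1⟩
      cases i with
      | zero => simpa [h0] using hs'
      | succ i => exact hρ i (by simpa using hi)
    · rintro ⟨ρ, hρ, rfl, h1⟩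
      exact ⟨ρ 1, hρ 0 (by simp), ih.2 ⟨fun i => ρ (i + 1), fun i hi => hρ (i + 1) (by simpa),
        rfl, h1⟩⟩

theorem IsRun.infix {w : List α} {ρ : ℕ → σ} (h : M.IsRun w ρ) (i j : ℕ) :
    M.IsRun ((w.take j).drop i) (fun k => ρ (i + k)) := by
  intro k hk
  simp only [List.length_drop, List.length_take] at hk
  simpa [← Nat.add_assoc] using h (i + k) (by omega)

theorem IsRun.mem_evalFrom_infix {w : List α} {ρ : ℕ → σ} (h : M.IsRun w ρ) {i j : ℕ}
    (hij : i ≤ j) (hj : j ≤ w.length) : ρ j ∈ M.evalFrom {ρ i} ((w.take j).drop i) :=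
  mem_evalFrom_singleton_iff_exists_isRun.2
    ⟨_, h.infix i j, by simp, by simp [Nat.min_eq_left hj, Nat.add_sub_cancel' hij]⟩

theorem mem_evalFrom_append_of_mem {s t u : σ} {x y : List α} (hx : t ∈ M.evalFrom {s} x)
    (hy : u ∈ M.evalFrom {t} y) : u ∈ M.evalFrom {s} (x ++ y) := by
  rw [evalFrom_append, mem_evalFrom_iff_exists]
  exact ⟨t, hx, hy⟩

theorem mem_evalFrom_flatten {s : σ} {xs : List (List α)} (h : ∀ x ∈ xs, s ∈ M.evalFrom {s} x) :
    s ∈ M.evalFrom {s} xs.flatten := by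
  induction xs with
  | nil => rfl
  | cons x xs ih =>
    exact mem_evalFrom_append_of_mem (h x (by simp)) (ih fun y hy => h y (by simp [hy]))

end NFA

theorem bireachable_of_isRun {α σ : Type*} {step : σ → α → Set σ} {q0 : σ} {F : Set σ}
    {w : List α} {ρ : ℕ → σ} (hρ : (NFA.mk step {q0} F).IsRun w ρ) (h0 : ρ 0 = q0)
    (hF : ρ w.length ∈ F) {i : ℕ} (hi : i ≤ w.length) : Bireachable step q0 F (ρ i) := by
  refine ⟨⟨w.take i, ?_⟩, ⟨w.drop i, _, hF, ?_⟩⟩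
  · simpa [h0] using hρ.mem_evalFrom_infix (Nat.zero_le i) hi
  · simpa using hρ.mem_evalFrom_infix hi le_rfl

section Visits

variable {α σ : Type*} {ρ : ℕ → σ} {n i : ℕ} {q : σ}

def visits (ρ : ℕ → σ) (n : ℕ) (q : σ) : Set ℕ := {i | i ≤ n ∧ ρ i = q}

-- Both are `0` when `q` is not visited up to time `n`.
noncomputable def firstVisit (ρ : ℕ → σ) (n : ℕ) (q : σ) : ℕ := sInf (visits ρ n q)

noncomputable def lastVisit (ρ : ℕ → σ) (n : ℕ) (q : σ) : ℕ := sSup (visits ρ n q)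

noncomputable def visitSignature (ρ : ℕ → σ) (w : List α) (q : σ) : ℕ × ℕ × Option α :=
  (firstVisit ρ w.length q, lastVisit ρ w.length q, w[lastVisit ρ w.length q]?)

theorem bddAbove_visits : BddAbove (visits ρ n q) := ⟨n, fun _ h => h.1⟩

theorem firstVisit_le (h : i ∈ visits ρ n q) : firstVisit ρ n q ≤ i := Nat.sInf_le h

theorem le_lastVisit (h : i ∈ visits ρ n q) : i ≤ lastVisit ρ n q := le_csSup bddAbove_visits h

theorem firstVisit_mem (h : (visits ρ n q).Nonempty) : firstVisit ρ n q ∈ visits ρ n q :=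
  Nat.sInf_mem h

theorem lastVisit_mem (h : (visits ρ n q).Nonempty) : lastVisit ρ n q ∈ visits ρ n q :=
  Nat.sSup_mem h bddAbove_visits

theorem lastVisit_le : lastVisit ρ n q ≤ n := csSup_le' fun _ h => h.1

theorem firstVisit_le_self : firstVisit ρ n q ≤ n := by
  rcases (visits ρ n q).eq_empty_or_nonempty with h | h
  · simp [firstVisit, h]
  · exact (firstVisit_mem h).1

theorem nonempty_visits_of_lastVisit_ne_zero (h : lastVisit ρ n q ≠ 0) :
    (visits ρ n q).Nonempty :=
  Set.nonempty_iff_ne_empty.2 fun he => h (by simp [lastVisit, he])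

theorem visitSignature_mem_piFinset [Fintype σ] [DecidableEq σ] [Fintype α] (w : List α) :
    visitSignature ρ w ∈ Fintype.piFinset fun _ : σ =>
      Finset.range (w.length + 1) ×ˢ Finset.range (w.length + 1) ×ˢ Finset.univ :=
  Fintype.mem_piFinset.2 fun _ => by
    simp [visitSignature, firstVisit_le_self, lastVisit_le]

end Visits

theorem List.drop_take_append_cons {α : Type*} {p s : List α} {a : α} {i j : ℕ}
    (hi : i ≤ p.length) (hj : p.length < j) :
    ((p ++ a :: s).take j).drop i = p.drop i ++ a :: s.take (j - p.length - 1) := by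
  obtain ⟨k, rfl⟩ := Nat.exists_eq_add_of_lt hj
  rw [List.take_append, List.take_of_length_le (by omega), Nat.add_assoc, Nat.add_sub_cancel_left,
    List.take_succ_cons, List.drop_append_of_le_length hi]
  simp

/-- At the first difference `d` of `u` and `v`, either `ρu d` is never visited again, and then the
signature records the letter read at `d`, or both runs loop at `ρu d` around `d`, and the two loop
words are comparable. -/
theorem lexComp_of_visitSignature_eq {α σ : Type*} {r : α → α → Prop} [Std.Irrefl r] {M : NFA α σ}
    {u v : List α} {ρu ρv : ℕ → σ} (hu : M.IsRun u ρu) (hv : M.IsRun v ρv)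
    (hlen : u.length = v.length) (hne : u ≠ v)
    (hsig : visitSignature ρu u = visitSignature ρv v)
    (hloop : ∀ i ≤ u.length, IsChainLang r (NFA.mk M.step {ρu i} {ρu i}).accepts) :
    LexComp r u v := by
  obtain ⟨p, a, s, b, t, rfl, rfl, hab⟩ := exists_append_cons_of_length_eq hlen hne
  set n := (p ++ a :: s).length
  set q := ρu p.length
  have hdn : p.length < n := by simp [n]
  have hd : p.length ∈ visits ρu n q := ⟨hdn.le, rfl⟩
  have hsig_q := congrFun hsig q
  simp only [visitSignature, Prod.mk.injEq, ← hlen] at hsig_q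
  obtain ⟨hfirst, hlast, hletter⟩ := hsig_q
  rcases (le_lastVisit hd).eq_or_lt with hj | hj
  · rw [← hlast, ← hj] at hletter
    simp only [List.getElem?_append_right le_rfl, Nat.sub_self, List.getElem?_cons_zero,
      Option.some.injEq] at hletter
    exact absurd hletter hab
  set i := firstVisit ρu n q
  set j := lastVisit ρu n q
  have hv_ne : (visits ρv n q).Nonempty :=
    nonempty_visits_of_lastVisit_ne_zero (by omega)
  have hρu_i : ρu i = q := (firstVisit_mem ⟨_, hd⟩).2
  have hρu_j : ρu j = q := (lastVisit_mem ⟨_, hd⟩).2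
  have hρv_i : ρv i = q := hfirst ▸ (firstVisit_mem hv_ne).2
  have hρv_j : ρv j = q := hlast ▸ (lastVisit_mem hv_ne).2
  have hid : i ≤ p.length := firstVisit_le hd
  have hjn : j ≤ n := lastVisit_le
  have hx := hu.mem_evalFrom_infix (hid.trans hj.le) hjn
  have hy := hv.mem_evalFrom_infix (hid.trans hj.le) (hlen ▸ hjn)
  rw [hρu_i, hρu_j] at hx
  rw [hρv_i, hρv_j] at hy
  have hcomp := hloop p.length hdn.le _ ⟨q, rfl, hx⟩ _ ⟨q, rfl, hy⟩
  rw [List.drop_take_append_cons hid hj, List.drop_take_append_cons hid hj,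
    lexComp_append_cons_iff hab] at hcomp
  rwa [lexComp_append_cons_iff hab]

section Growth

variable {α : Type*} {L : Set (List α)}

theorem polyGrowth_iff : PolyGrowth L ↔ ∃ k C : ℕ, ∀ᶠ n in atTop, countLen L n ≤ C * n ^ k := by
  constructor
  · rintro ⟨k, hk⟩
    obtain ⟨C, hC⟩ := ENNReal.exists_nat_gt hk.ne
    refine ⟨k, C, ?_⟩
    filter_upwards [eventually_lt_of_limsup_lt hC, eventually_ge_atTop 1] with n hn hn1
    rw [ENNReal.div_lt_iff (.inl (by positivity)) (.inl (by simp))] at hn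
    exact_mod_cast hn.le
  · rintro ⟨k, C, hC⟩
    refine ⟨k, lt_of_le_of_lt (limsup_le_of_le (by isBoundedDefault) ?_) (ENNReal.natCast_lt_top C)⟩
    filter_upwards [hC] with n hn
    exact ENNReal.div_le_of_le_mul (by exact_mod_cast hn)

theorem not_eventually_two_pow_le_mul_pow (D k : ℕ) : ¬ ∀ᶠ j in atTop, 2 ^ j ≤ D * j ^ k := by
  intro h
  have hlim : Tendsto (fun j : ℕ => (D : ℝ) * ((j : ℝ) ^ k / 2 ^ j)) atTop (nhds 0) := by
    simpa using (tendsto_pow_const_div_const_pow_of_one_lt k one_lt_two).const_mul (D : ℝ)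
  obtain ⟨j, hle, hlt⟩ := (h.and (hlim.eventually (gt_mem_nhds one_pos))).exists
  rw [mul_div_assoc', div_lt_one (by positivity)] at hlt
  exact hlt.not_ge (by exact_mod_cast hle)

theorem not_polyGrowth_of_two_pow_le {c m : ℕ} (hm : 0 < m)
    (h : ∀ j, 2 ^ j ≤ countLen L (c + m * j)) : ¬ PolyGrowth L := by
  rw [polyGrowth_iff]
  rintro ⟨k, C, hC⟩
  have hlen : Tendsto (fun j => c + m * j) atTop atTop :=
    tendsto_atTop_mono (fun j => le_add_left (Nat.le_mul_of_pos_left j hm)) tendsto_id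
  refine not_eventually_two_pow_le_mul_pow (C * (c + m) ^ k) k ?_
  filter_upwards [hlen.eventually hC, eventually_ge_atTop 1] with j hj hj1
  calc 2 ^ j ≤ C * (c + m * j) ^ k := (h j).trans hj
    _ ≤ C * ((c + m) * j) ^ k := by gcongr; nlinarith
    _ = C * (c + m) ^ k * j ^ k := by rw [mul_pow, mul_assoc]

end Growth

section Families

variable {α β : Type*} {r : α → α → Prop} [Std.Irrefl r] {g : β → List α} {m : ℕ}

theorem length_flatten_map_of_forall_length_eq (hgl : ∀ x, (g x).length = m) (bs : List β) :
    (bs.map g).flatten.length = m * bs.length := by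
  simp [List.length_flatten, Function.comp_def, hgl, mul_comm]

theorem antichainFamily_range_flatten_map (hg : ∀ x y, x ≠ y → ¬ LexComp r (g x) (g y))
    (hm : 0 < m) (hgl : ∀ x, (g x).length = m) (z x : List α) :
    AntichainFamily r (Set.range fun bs : List β => z ++ (bs.map g).flatten ++ x) := by
  rintro n _ ⟨⟨bs, rfl⟩, hn⟩ _ ⟨⟨bs', rfl⟩, hn'⟩ hne
  have hlen : bs.length = bs'.length := by
    simp only [List.length_append, length_flatten_map_of_forall_length_eq hgl] at hn hn'
    exact Nat.eq_of_mul_eq_mul_left hm (by omega)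
  exact not_lexComp_flatten_map hg hlen (fun h => hne (h ▸ rfl)) z x x

theorem countLen_range_flatten_map [Fintype β] (hg : ∀ x y, x ≠ y → ¬ LexComp r (g x) (g y))
    (hm : 0 < m) (hgl : ∀ x, (g x).length = m) (z x : List α) (j : ℕ) :
    countLen (Set.range fun bs : List β => z ++ (bs.map g).flatten ++ x)
      (z.length + x.length + m * j) = Fintype.card β ^ j := by
  have hlen (bs : List β) :
      (z ++ (bs.map g).flatten ++ x).length = z.length + x.length + m * bs.length := by
    simp only [List.length_append, length_flatten_map_of_forall_length_eq hgl]
    omega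
  have hinj :
      Function.Injective fun v : Fin j → β => z ++ ((List.ofFn v).map g).flatten ++ x := by
    intro v v' h
    by_contra hne
    refine not_lexComp_flatten_map hg (by simp) (List.ofFn_injective.ne hne) z x x ?_
    rw [show z ++ ((List.ofFn v).map g).flatten ++ x = _ from h]
    exact lexComp_refl _
  have hset : {w ∈ Set.range (fun bs : List β => z ++ (bs.map g).flatten ++ x) |
      w.length = z.length + x.length + m * j} =
      Set.range fun v : Fin j → β => z ++ ((List.ofFn v).map g).flatten ++ x := by
    ext w
    constructor
    · rintro ⟨⟨bs, rfl⟩, hw⟩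
      have hbs : bs.length = j := Nat.eq_of_mul_eq_mul_left hm (by rw [hlen] at hw; omega)
      exact ⟨fun i => bs[i], by simp [← hbs]⟩
    · rintro ⟨v, rfl⟩
      exact ⟨⟨_, rfl⟩, by rw [hlen, List.length_ofFn]⟩
  rw [countLen, hset, Set.ncard_range_of_injective hinj]
  simp

end Families

section Automaton

variable {Sigma Q : Type*} {r : Sigma → Sigma → Prop} {step : Q → Sigma → Set Q} {q0 : Q}
  {F : Set Q}

theorem not_polyAntichainGrowth_of_not_isChainLang [Std.Irrefl r] {q : Q}
    (hq : Bireachable step q0 F q) (hnc : ¬ IsChainLang r (NFA.mk step {q} {q}).accepts) :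
    ¬ PolyAntichainGrowth r (NFA.mk step {q0} F).accepts := by
  intro hpoly
  set M := NFA.mk step {q0} F
  simp only [IsChainLang, not_forall] at hnc
  obtain ⟨u, ⟨_, hqu, hu⟩, v, ⟨_, hqv, hv⟩, huv⟩ := hnc
  replace hu : q ∈ M.evalFrom {q} u := hqu ▸ hu
  replace hv : q ∈ M.evalFrom {q} v := hqv ▸ hv
  obtain ⟨⟨w0, hw0⟩, ⟨w1, qf, hqf, hw1⟩⟩ := hq
  set g : Bool → List Sigma := fun c => if c then u ++ v else v ++ u
  have hg : ∀ x y, x ≠ y → ¬ LexComp r (g x) (g y) := by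
    have h := not_lexComp_append_append huv [] v u
    rintro (_ | _) (_ | _) hxy <;> simp only [g] at hxy ⊢
    exacts [absurd rfl hxy, lexComp_comm.not.1 h, h, absurd rfl hxy]
  have hgl : ∀ x, (g x).length = u.length + v.length := by
    rintro (_ | _) <;> simp [g, add_comm]
  have hm : 0 < u.length + v.length := by
    have : 0 < u.length := List.length_pos_iff.2 (by rintro rfl; exact huv (.inl (.nil v)))
    omega
  have hgq : ∀ x, q ∈ M.evalFrom {q} (g x) := by
    rintro (_ | _)
    exacts [M.mem_evalFrom_append_of_mem hv hu, M.mem_evalFrom_append_of_mem hu hv]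
  refine not_polyGrowth_of_two_pow_le hm
    (fun j => (countLen_range_flatten_map hg hm hgl w0 w1 j).ge) (hpoly _ ?_
    (antichainFamily_range_flatten_map hg hm hgl w0 w1))
  rintro _ ⟨bs, rfl⟩
  refine ⟨qf, hqf, M.mem_evalFrom_append_of_mem (M.mem_evalFrom_append_of_mem hw0 ?_) hw1⟩
  exact M.mem_evalFrom_flatten (by simp only [List.mem_map]; rintro _ ⟨c, -, rfl⟩; exact hgq c)

variable [Fintype Sigma] [Fintype Q] [Std.Irrefl r]

theorem countLen_le_of_antichainFamily
    (hchain : ∀ q, Bireachable step q0 F q → IsChainLang r (NFA.mk step {q} {q}).accepts)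
    {L : Set (List Sigma)} (hL : L ⊆ (NFA.mk step {q0} F).accepts) (hA : AntichainFamily r L)
    (n : ℕ) :
    countLen L n ≤ ((n + 1) * (n + 1) * (Fintype.card Sigma + 1)) ^ Fintype.card Q := by
  classical
  have hfin : {w ∈ L | w.length = n}.Finite :=
    (List.finite_length_eq Sigma n).subset fun _ h => h.2
  rw [countLen, Set.ncard_eq_toFinset_card _ hfin]
  calc _ ≤ (Fintype.piFinset fun _ : Q => Finset.range (n + 1) ×ˢ Finset.range (n + 1) ×ˢ
          (Finset.univ : Finset (Option Sigma))).card := by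
        refine Finset.card_le_card_of_forall_subsingleton (fun w sig => ∃ ρ,
          (NFA.mk step {q0} F).IsRun w ρ ∧ ρ 0 = q0 ∧ ρ w.length ∈ F ∧ visitSignature ρ w = sig)
          ?_ ?_
        · intro w hw
          obtain ⟨hwL, rfl⟩ := hfin.mem_toFinset.1 hw
          obtain ⟨qf, hqf, hrun⟩ := hL hwL
          obtain ⟨ρ, hρ, h0, h1⟩ := NFA.mem_evalFrom_singleton_iff_exists_isRun.1 hrun
          exact ⟨_, visitSignature_mem_piFinset w, ρ, hρ, h0, h1 ▸ hqf, rfl⟩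
        · rintro sig - u ⟨hu, ρu, hρu, h0, hF, hsu⟩ v ⟨hv, ρv, hρv, -, -, hsv⟩
          by_contra hne
          rw [Set.Finite.mem_toFinset] at hu hv
          exact hA n u hu v hv hne (lexComp_of_visitSignature_eq hρu hρv (hu.2.trans hv.2.symm)
            hne (hsu.trans hsv.symm) fun i hi => hchain _ (bireachable_of_isRun hρu h0 hF hi))
    _ = _ := by simp [Fintype.card_piFinset, mul_assoc]

theorem polyAntichainGrowth_of_isChainLang
    (hchain : ∀ q, Bireachable step q0 F q → IsChainLang r (NFA.mk step {q} {q}).accepts) :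
    PolyAntichainGrowth r (NFA.mk step {q0} F).accepts := by
  intro L hL hA
  rw [polyGrowth_iff]
  refine ⟨2 * Fintype.card Q, (4 * (Fintype.card Sigma + 1)) ^ Fintype.card Q, ?_⟩
  filter_upwards [eventually_ge_atTop 1] with n hn
  calc countLen L n
      ≤ ((n + 1) * (n + 1) * (Fintype.card Sigma + 1)) ^ Fintype.card Q :=
        countLen_le_of_antichainFamily hchain hL hA n
    _ ≤ ((2 * n) * (2 * n) * (Fintype.card Sigma + 1)) ^ Fintype.card Q := by gcongr <;> omega
    _ = (4 * (Fintype.card Sigma + 1)) ^ Fintype.card Q * n ^ (2 * Fintype.card Q) := by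
        rw [pow_mul, ← mul_pow]; ring

end Automaton

/-- The language of an NFA `A` over a partially ordered alphabet has polynomial antichain
growth iff `L(A_{q,q})` is a chain for every bireachable state `q`. -/
theorem nfa_poly_antichain_iff_chains {Sigma Q : Type*} [Fintype Sigma] [Fintype Q]
    [PartialOrder Sigma] (step : Q → Sigma → Set Q) (q0 : Q) (F : Set Q) :
    PolyAntichainGrowth (· < ·) ((NFA.mk step {q0} F).accepts : Set (List Sigma)) ↔
      ∀ q : Q, Bireachable step q0 F q →
        IsChainLang (· < ·) ((NFA.mk step {q} {q}).accepts : Set (List Sigma)) :=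
  ⟨fun hpoly _ hq => by_contra fun hnc => not_polyAntichainGrowth_of_not_isChainLang hq hnc hpoly,
    polyAntichainGrowth_of_isChainLang⟩
end

section
/- Let G be a context-free grammar over a partially ordered terminal alphabet Σ, A a bireachable nonterminal of G, and w ∈ Σ* such that R_{A,w}(G) is not a chain. Then 𝓛(G) has exponential antichain growth. -/
/-! If `u₁, u₂ ∈ R_{A,w}(G)` are incomparable, applying `A ⇒* wAu₁` and `A ⇒* wAu₂` in
either order gives `A ⇒* wwA·u₁u₂` and `A ⇒* wwA·u₂u₁`: two blocks of the same length that stay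
incomparable however they are continued. Pumping `A` along a binary string of length `n`,
choosing one of the two blocks at each step, and closing off by bireachability yields `2ⁿ`
pairwise incomparable words of `𝓛(G)` of the same length `c + n d`, i.e. exponential growth
of order `1 / d`. -/

open Filter
open scoped ENNReal

/-- `L_A(G) = {w | A ⇒* wAu for some u}`. -/
def cfgL {T : Type} (G : ContextFreeGrammar T) (A : G.NT) : Set (List T) :=
  {w | ∃ u : List T, G.Derives [Symbol.nonterminal A]
    (w.map Symbol.terminal ++ [Symbol.nonterminal A] ++ u.map Symbol.terminal)}

/-- `R_{A,w}(G) = {u | A ⇒* wAu}`. -/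
def cfgR {T : Type} (G : ContextFreeGrammar T) (A : G.NT) (w : List T) : Set (List T) :=
  {u | G.Derives [Symbol.nonterminal A]
    (w.map Symbol.terminal ++ [Symbol.nonterminal A] ++ u.map Symbol.terminal)}

/-- A nonterminal `A` is bireachable if `S ⇒* uAu'` for some terminal words `u, u'` and
`A ⇒* v` for some terminal word `v`. -/
def CfgBireachable {T : Type} (G : ContextFreeGrammar T) (A : G.NT) : Prop :=
  (∃ u u' : List T, G.Derives [Symbol.nonterminal G.initial]
    (u.map Symbol.terminal ++ [Symbol.nonterminal A] ++ u'.map Symbol.terminal)) ∧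
  (∃ v : List T, G.Derives [Symbol.nonterminal A] (v.map Symbol.terminal))

namespace LexR

variable {α : Type*} {r : α → α → Prop}

theorem refl (r : α → α → Prop) : ∀ u : List α, LexR r u u
  | [] => nil []
  | x :: u => cons x (refl r u)

theorem of_append_left_s13 [Std.Irrefl r] :
    ∀ {c u v : List α}, LexR r (c ++ u) (c ++ v) → LexR r u v
  | [], _, _, h => h
  | x :: _, _, _, h => by
    cases h with
    | head _ _ hxx => exact absurd hxx (irrefl x)
    | cons _ h => exact of_append_left_s13 h

end LexR

section Incomparable

variable {α : Type*} {r : α → α → Prop}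

theorem not_lexComp_append_left [Std.Irrefl r] {u v : List α} (h : ¬ LexComp r u v)
    (c : List α) : ¬ LexComp r (c ++ u) (c ++ v) := by
  rintro (huv | hvu)
  exacts [h (.inl huv.of_append_left_s13), h (.inr hvu.of_append_left_s13)]

/-- Incomparable words differ at a position where both have incomparable letters, so any
extensions of them stay incomparable. -/
theorem not_lexComp_append_right :
    ∀ {u v : List α}, ¬ LexComp r u v → ∀ t t' : List α, ¬ LexComp r (u ++ t) (v ++ t')
  | [], v, h, _, _ => absurd (.inl (.nil v)) h
  | u, [], h, _, _ => absurd (.inr (.nil u)) h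
  | x :: u, y :: v, h, t, t' => by
    rintro (hlt | hgt)
    · cases hlt with
      | head _ _ hxy => exact h (.inl (.head u v hxy))
      | cons _ hlt =>
        exact not_lexComp_append_right (fun h' => h (h'.elim (.inl ∘ .cons x) (.inr ∘ .cons x)))
          t t' (.inl hlt)
    · cases hgt with
      | head _ _ hyx => exact h (.inr (.head v u hyx))
      | cons _ hgt =>
        exact not_lexComp_append_right (fun h' => h (h'.elim (.inl ∘ .cons x) (.inr ∘ .cons x)))
          t t' (.inr hgt)

theorem not_lexComp_flatten_map_s13 [Std.Irrefl r] {ι : Type*} (block : ι → List α)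
    (hblock : ∀ i j, i ≠ j → ∀ t t', ¬ LexComp r (block i ++ t) (block j ++ t')) :
    ∀ {σ τ : List ι}, σ.length = τ.length → σ ≠ τ → ∀ t t',
      ¬ LexComp r ((σ.map block).flatten ++ t) ((τ.map block).flatten ++ t')
  | [], [], _, hne, _, _ => absurd rfl hne
  | i :: σ, j :: τ, hlen, hne, t, t' => by
    simp only [List.map_cons, List.flatten_cons, List.append_assoc]
    obtain rfl | hij := eq_or_ne i j
    · have hστ : σ ≠ τ := fun h => hne (h ▸ rfl)
      exact not_lexComp_append_left
        (not_lexComp_flatten_map_s13 block hblock (Nat.succ.inj hlen) hστ t t') _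
    · exact hblock i j hij _ _

end Incomparable

section Growth

theorem expGrowth_of_two_pow_le_countLen {α : Type*} {L : Set (List α)} {c d : ℕ} (hd : 0 < d)
    (hcount : ∀ n, 2 ^ n ≤ countLen L (c + n * d)) : ExpGrowth L := by
  refine ⟨1 / d, by positivity, lt_of_lt_of_le (b := ((2 : ℝ≥0∞) ^ c)⁻¹) (by simp) ?_⟩
  refine le_limsup_of_frequently_le' (frequently_atTop.2 fun N => ⟨c + N * d, by nlinarith, ?_⟩)
  have hexp : (1 / d : ℝ) * ((c + N * d : ℕ) : ℝ) ≤ ((N + c : ℕ) : ℝ) := by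
    have hd' : (1 : ℝ) ≤ d := by exact_mod_cast hd
    push_cast
    rw [div_mul_eq_mul_div, div_le_iff₀ (by positivity)]
    nlinarith [Nat.cast_nonneg (α := ℝ) c, Nat.cast_nonneg (α := ℝ) N]
  calc ((2 : ℝ≥0∞) ^ c)⁻¹ = 2 ^ N / 2 ^ (N + c) := by
        rw [pow_add, ← one_div, ← ENNReal.mul_div_mul_left 1 _ (pow_ne_zero N two_ne_zero)
          (ENNReal.pow_ne_top ENNReal.ofNat_ne_top), mul_one]
    _ ≤ countLen L (c + N * d) / 2 ^ ((1 / d : ℝ) * ((c + N * d : ℕ) : ℝ)) := by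
        gcongr
        · exact_mod_cast hcount N
        · rw [← ENNReal.rpow_natCast]
          exact ENNReal.rpow_le_rpow_of_exponent_le one_le_two hexp

theorem two_pow_le_countLen_range {β : Type*} [Finite β] {word : List Bool → List β} {c d : ℕ}
    (hlen : ∀ σ, (word σ).length = c + σ.length * d)
    (hinj : ∀ σ τ, σ.length = τ.length → word σ = word τ → σ = τ) (n : ℕ) :
    2 ^ n ≤ countLen (Set.range word) (c + n * d) := by
  have hinj' : Function.Injective fun f : Fin n → Bool => word (List.ofFn f) :=
    fun f g hfg => List.ofFn_injective (hinj _ _ (by simp) hfg)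
  calc 2 ^ n = Nat.card (Fin n → Bool) := by simp
    _ = (Set.range fun f : Fin n → Bool => word (List.ofFn f)).ncard :=
        (Set.ncard_range_of_injective hinj').symm
    _ ≤ countLen (Set.range word) (c + n * d) := by
        refine Set.ncard_le_ncard ?_ ((List.finite_length_eq β _).subset fun _ hw => hw.2)
        rintro _ ⟨f, rfl⟩
        exact ⟨⟨_, rfl⟩, by simp [hlen]⟩

theorem expAntichainGrowth_of_incomparable_words {β : Type*} [Finite β] {r : β → β → Prop}
    {L : Set (List β)} {word : List Bool → List β} {c d : ℕ} (hd : 0 < d)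
    (hmem : ∀ σ, word σ ∈ L) (hlen : ∀ σ, (word σ).length = c + σ.length * d)
    (hinc : ∀ σ τ, σ.length = τ.length → σ ≠ τ → ¬ LexComp r (word σ) (word τ)) :
    ExpAntichainGrowth r L := by
  have hinj : ∀ σ τ, σ.length = τ.length → word σ = word τ → σ = τ := fun σ τ hl he =>
    by_contra fun hne => hinc σ τ hl hne (he ▸ .inl (LexR.refl r _))
  refine ⟨Set.range word, Set.range_subset_iff.2 hmem, ?_,
    expGrowth_of_two_pow_le_countLen hd (two_pow_le_countLen_range hlen hinj)⟩
  rintro n _ ⟨⟨σ, rfl⟩, hσ⟩ _ ⟨⟨τ, rfl⟩, hτ⟩ hne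
  rw [hlen] at hσ hτ
  have hl : σ.length = τ.length := Nat.eq_of_mul_eq_mul_right hd (by omega)
  exact hinc σ τ hl (fun h => hne (h ▸ rfl))

end Growth

namespace ContextFreeGrammar

variable {T : Type*} {G : ContextFreeGrammar T}

/-- `G.DerivesAround B A x y` means `B ⇒* x A y` for terminal words `x`, `y`; thus
`cfgR G A w = {u | G.DerivesAround A A w u}`. -/
def DerivesAround (G : ContextFreeGrammar T) (B A : G.NT) (x y : List T) : Prop :=
  G.Derives [.nonterminal B] (x.map .terminal ++ [.nonterminal A] ++ y.map .terminal)

theorem DerivesAround.trans {B A C : G.NT} {x y x' y' : List T} (h₁ : G.DerivesAround B A x y)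
    (h₂ : G.DerivesAround A C x' y') : G.DerivesAround B C (x ++ x') (y' ++ y) := by
  unfold DerivesAround at h₁ h₂ ⊢
  rw [List.append_assoc] at h₁
  have h := (h₂.append_right (y.map .terminal)).append_left (x.map .terminal)
  simpa only [List.map_append, List.append_assoc] using h₁.trans h

theorem DerivesAround.flatten_map {A : G.NT} {ι : Type*} {w : List T} (block : ι → List T)
    (hblock : ∀ i, G.DerivesAround A A w (block i)) :
    ∀ σ : List ι,
      G.DerivesAround A A (List.replicate σ.length w).flatten (σ.map block).flatten
  | [] => by simpa [DerivesAround] using Derives.refl _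
  | i :: σ => by
    simpa [List.replicate_succ'] using (flatten_map block hblock σ).trans (hblock i)

theorem DerivesAround.mem_language {A : G.NT} {x y v : List T}
    (h : G.DerivesAround G.initial A x y) (hv : G.Derives [.nonterminal A] (v.map .terminal)) :
    x ++ v ++ y ∈ G.language := by
  unfold DerivesAround at h
  rw [List.append_assoc] at h
  have hv' := (hv.append_right (y.map .terminal)).append_left (x.map .terminal)
  rw [mem_language_iff]
  simpa only [List.map_append, List.append_assoc] using h.trans hv'

end ContextFreeGrammar

open ContextFreeGrammar

/-- If `R_{A,w}(G)` is not a chain for some bireachable nonterminal `A` and some word `w`,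
then `L(G)` has exponential antichain growth. -/
theorem cfg_RAw_not_chain_exp_growth {T : Type} [Fintype T] [PartialOrder T]
    (G : ContextFreeGrammar T) (A : G.NT) (w : List T) (hbi : CfgBireachable G A)
    (hnc : ¬ IsChainLang (· < ·) (cfgR G A w)) :
    ExpAntichainGrowth (· < ·) (G.language : Set (List T)) := by
  obtain ⟨u₁, hu₁, u₂, hu₂, hu⟩ : ∃ u₁ ∈ cfgR G A w, ∃ u₂ ∈ cfgR G A w,
      ¬ LexComp (· < ·) u₁ u₂ := by simpa [IsChainLang] using hnc
  obtain ⟨⟨s, s', hS⟩, v, hv⟩ := hbi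
  let block : Bool → List T := fun i => if i then u₁ ++ u₂ else u₂ ++ u₁
  have hpump : ∀ i, G.DerivesAround A A (w ++ w) (block i)
    | true => DerivesAround.trans (G := G) hu₂ hu₁
    | false => DerivesAround.trans (G := G) hu₁ hu₂
  have hblock : ∀ i j, i ≠ j → ∀ t t', ¬ LexComp (· < ·) (block i ++ t) (block j ++ t')
    | true, false, _, t, t' => by
      simpa [block] using not_lexComp_append_right hu (u₂ ++ t) (u₁ ++ t')
    | false, true, _, t, t' => by
      simpa [block] using not_lexComp_append_right (fun h => hu (Or.symm h)) (u₁ ++ t) (u₂ ++ t')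
  have hu₁_ne : u₁ ≠ [] := by rintro rfl; exact hu (.inl (.nil u₂))
  refine expAntichainGrowth_of_incomparable_words
    (word := fun σ => s ++ (List.replicate σ.length (w ++ w)).flatten ++ v ++
      ((σ.map block).flatten ++ s'))
    (c := s.length + v.length + s'.length) (d := 2 * w.length + u₁.length + u₂.length)
    (by have := List.length_pos_of_ne_nil hu₁_ne; omega)
    (fun σ => (DerivesAround.trans hS (.flatten_map block hpump σ)).mem_language hv) ?_ ?_
  · intro σ
    have hblen : ∀ i, (block i).length = u₁.length + u₂.length := by
      rintro (_ | _) <;> simp [block, add_comm]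
    simp only [List.append_assoc, List.length_append, List.length_flatten, List.map_replicate,
      List.sum_replicate, smul_eq_mul, List.map_map, Function.comp_def, hblen, List.map_const']
    ring
  · intro σ τ hl hne
    simp only [← hl]
    exact not_lexComp_append_left (not_lexComp_flatten_map_s13 block hblock hl hne s' s') _
end
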